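/- arXiv:2105.05058 — 6 statements merged into one kernel-verified Lean document; each statement's English description precedes it below -/
import Mathlib

section
/- For |q| < 1 and |x| < 1, the generating function identity Σ_{k≥0} x^k (y;q)_k / (q;q)_k = (yx;q)_∞ / (x;q)_∞ holds, where (x;q)_n = ∏_{i=1}^n (1 - x q^{i-1}) and (x;q)_∞ = ∏_{i=1}^∞ (1 - x q^{i-1}). -/
open Complex Finset

noncomputable def Complex.abs : AbsoluteValue ℂ ℝ := IsAbsoluteValue.toAbsoluteValue (norm : ℂ → ℝ)

lemma Complex.norm_eq_abs (z : ℂ) : ‖z‖ = Complex.abs z := rfl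

lemma qfac_ne_zero {q z : ℂ} (hq : Complex.abs q < 1) (hz : Complex.abs z < 1) (i : ℕ) :
    1 - z * q ^ i ≠ 0 := by
  intro h
  have h1 : z * q ^ i = 1 := by
    have := sub_eq_zero.mp h
    exact this.symm
  have : Complex.abs (z * q ^ i) < 1 := by
    rw [map_mul, map_pow]
    calc Complex.abs z * Complex.abs q ^ i ≤ Complex.abs z * 1 := by
          apply mul_le_mul_of_nonneg_left (pow_le_one₀ (Complex.abs.nonneg q) hq.le)
            (Complex.abs.nonneg z)
      _ = Complex.abs z := mul_one _
      _ < 1 := hz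
  rw [h1] at this
  simp at this

lemma qlog_summable {q : ℂ} (z : ℂ) (hq : Complex.abs q < 1) :
    Summable (fun n : ℕ => Complex.log (1 - z * q ^ n)) := by
  apply Summable.of_norm_bounded_eventually_nat
    (g := fun n => 3 / 2 * (Complex.abs z * Complex.abs q ^ n))
  · exact ((summable_geometric_of_lt_one (Complex.abs.nonneg q) hq).mul_left _).mul_left _
  · have htend : Filter.Tendsto (fun n : ℕ => Complex.abs z * Complex.abs q ^ n)
        Filter.atTop (nhds 0) := by
      simpa using (tendsto_pow_atTop_nhds_zero_of_lt_one (Complex.abs.nonneg q) hq).const_mul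
        (Complex.abs z)
    filter_upwards [htend.eventually_le_const (by norm_num : (0:ℝ) < 1/2)] with n hn
    have h2 : ‖-(z * q ^ n)‖ ≤ 1 / 2 := by
      rw [norm_neg, Complex.norm_eq_abs, map_mul, map_pow]
      exact hn
    have := Complex.norm_log_one_add_half_le_self h2
    rw [show (1 : ℂ) + -(z * q ^ n) = 1 - z * q ^ n by ring] at this
    calc ‖Complex.log (1 - z * q ^ n)‖ ≤ 3 / 2 * ‖-(z * q ^ n)‖ := this
      _ = 3 / 2 * (Complex.abs z * Complex.abs q ^ n) := by
          rw [norm_neg, Complex.norm_eq_abs, map_mul, map_pow]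

lemma qmult_aux {q z : ℂ} (hq : Complex.abs q < 1) (hz : ∀ i : ℕ, 1 - z * q ^ i ≠ 0) :
    Multipliable (fun i : ℕ => 1 - z * q ^ i) ∧ (∏' i : ℕ, (1 - z * q ^ i)) ≠ 0 := by
  have hmul : Multipliable (fun i : ℕ => 1 - z * q ^ i) :=
    Complex.multipliable_of_summable_log (qlog_summable z hq)
  refine ⟨hmul, ?_⟩
  have h2 := Complex.cexp_tsum_eq_tprod (f := fun n => 1 - z * q ^ n) hz (qlog_summable z hq)
  rw [← h2]
  exact Complex.exp_ne_zero _

lemma qmultipliable {q : ℂ} (z : ℂ) (hq : Complex.abs q < 1) :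
    Multipliable (fun i : ℕ => 1 - z * q ^ i) := by
  have htend : Filter.Tendsto (fun n : ℕ => Complex.abs z * Complex.abs q ^ n)
      Filter.atTop (nhds 0) := by
    simpa using (tendsto_pow_atTop_nhds_zero_of_lt_one (Complex.abs.nonneg q) hq).const_mul
      (Complex.abs z)
  obtain ⟨N, hN⟩ := (htend.eventually_lt_const (by norm_num : (0:ℝ) < 1)).exists
  apply Multipliable.comp_nat_add (k := N)
  have hzN : Complex.abs (z * q ^ N) < 1 := by rwa [map_mul, map_pow]
  have := (qmult_aux hq (qfac_ne_zero hq hzN)).1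
  apply this.congr
  intro n
  rw [pow_add]
  ring

/-- The q-Pochhammer symbol `(x;q)_n = ∏_{i=0}^{n-1} (1 - x q^i)` over ℂ. -/
noncomputable def qPochC (x q : ℂ) (n : ℕ) : ℂ := ∏ i ∈ Finset.range n, (1 - x * q ^ i)

lemma qpoch_upper {q : ℂ} (y : ℂ) (hq : Complex.abs q < 1) (k : ℕ) :
    Complex.abs (qPochC y q k) ≤ Real.exp (Complex.abs y / (1 - Complex.abs q)) := by
  have h1q : (0:ℝ) < 1 - Complex.abs q := by linarith
  rw [qPochC, map_prod]
  calc ∏ i ∈ range k, Complex.abs (1 - y * q ^ i)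
      ≤ ∏ i ∈ range k, Real.exp (Complex.abs y * Complex.abs q ^ i) := by
        apply Finset.prod_le_prod (fun i _ => Complex.abs.nonneg _)
        intro i _
        calc Complex.abs (1 - y * q ^ i) ≤ Complex.abs 1 + Complex.abs (y * q ^ i) :=
              Complex.abs.sub_le_add _ _
          _ = 1 + Complex.abs y * Complex.abs q ^ i := by rw [map_one, map_mul, map_pow]
          _ ≤ Real.exp (Complex.abs y * Complex.abs q ^ i) := by
              have := Real.add_one_le_exp (Complex.abs y * Complex.abs q ^ i)
              linarith
    _ = Real.exp (∑ i ∈ range k, Complex.abs y * Complex.abs q ^ i) := (Real.exp_sum _ _).symm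
    _ ≤ Real.exp (Complex.abs y / (1 - Complex.abs q)) := by
        apply Real.exp_le_exp.mpr
        rw [← Finset.mul_sum, div_eq_mul_inv]
        apply mul_le_mul_of_nonneg_left _ (Complex.abs.nonneg y)
        calc ∑ i ∈ range k, Complex.abs q ^ i ≤ ∑' i : ℕ, Complex.abs q ^ i :=
              Summable.sum_le_tsum _ (fun i _ => pow_nonneg (Complex.abs.nonneg q) i)
                (summable_geometric_of_lt_one (Complex.abs.nonneg q) hq)
          _ = (1 - Complex.abs q)⁻¹ := tsum_geometric_of_lt_one (Complex.abs.nonneg q) hq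

lemma qpoch_lower {q : ℂ} (hq : Complex.abs q < 1) (k : ℕ) :
    Real.exp (-(Complex.abs q / (1 - Complex.abs q) ^ 2)) ≤ Complex.abs (qPochC q q k) := by
  have h1q : (0:ℝ) < 1 - Complex.abs q := by linarith
  rw [qPochC, map_prod]
  calc Real.exp (-(Complex.abs q / (1 - Complex.abs q) ^ 2))
      ≤ Real.exp (-∑ i ∈ range k, Complex.abs q * Complex.abs q ^ i / (1 - Complex.abs q)) := by
        apply Real.exp_le_exp.mpr
        rw [neg_le_neg_iff]
        calc ∑ i ∈ range k, Complex.abs q * Complex.abs q ^ i / (1 - Complex.abs q)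
            = (Complex.abs q / (1 - Complex.abs q)) * ∑ i ∈ range k, Complex.abs q ^ i := by
              rw [Finset.mul_sum]; congr 1; ext i; ring
          _ ≤ (Complex.abs q / (1 - Complex.abs q)) * (1 - Complex.abs q)⁻¹ := by
              apply mul_le_mul_of_nonneg_left _ (div_nonneg (Complex.abs.nonneg q) h1q.le)
              calc ∑ i ∈ range k, Complex.abs q ^ i ≤ ∑' i : ℕ, Complex.abs q ^ i :=
                    Summable.sum_le_tsum _ (fun i _ => pow_nonneg (Complex.abs.nonneg q) i)
                      (summable_geometric_of_lt_one (Complex.abs.nonneg q) hq)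
                _ = (1 - Complex.abs q)⁻¹ := tsum_geometric_of_lt_one (Complex.abs.nonneg q) hq
          _ = Complex.abs q / (1 - Complex.abs q) ^ 2 := by
              rw [div_eq_mul_inv, mul_assoc, ← mul_inv, ← sq, ← div_eq_mul_inv]
    _ = ∏ i ∈ range k, Real.exp (-(Complex.abs q * Complex.abs q ^ i / (1 - Complex.abs q))) := by
        rw [← Real.exp_sum, ← Finset.sum_neg_distrib]
    _ ≤ ∏ i ∈ range k, Complex.abs (1 - q * q ^ i) := by
        apply Finset.prod_le_prod (fun i _ => (Real.exp_pos _).le)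
        intro i _
        set t : ℝ := Complex.abs q * Complex.abs q ^ i with ht
        have ht0 : 0 ≤ t := mul_nonneg (Complex.abs.nonneg q) (pow_nonneg (Complex.abs.nonneg q) i)
        have htq : t ≤ Complex.abs q := by
          calc t ≤ Complex.abs q * 1 := by
                apply mul_le_mul_of_nonneg_left (pow_le_one₀ (Complex.abs.nonneg q) hq.le)
                  (Complex.abs.nonneg q)
            _ = Complex.abs q := mul_one _
        have htlt : t < 1 := lt_of_le_of_lt htq hq
        have key : Real.exp (-(t / (1 - Complex.abs q))) ≤ 1 - t := by
          rw [Real.exp_neg]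
          rw [inv_le_comm₀ (Real.exp_pos _) (by linarith)]
          have h1t : (1:ℝ) - t ≠ 0 := by linarith
          calc (1 - t)⁻¹ = 1 + t / (1 - t) := by field_simp; ring
            _ ≤ 1 + t / (1 - Complex.abs q) := by
                gcongr
            _ ≤ Real.exp (t / (1 - Complex.abs q)) := by
                have := Real.add_one_le_exp (t / (1 - Complex.abs q))
                linarith
        calc Real.exp (-(t / (1 - Complex.abs q))) ≤ 1 - t := key
          _ ≤ Complex.abs (1 - q * q ^ i) := by
              have := norm_sub_norm_le (1 : ℂ) (q * q ^ i)
              simp only [Complex.norm_eq_abs, map_one, map_mul, map_pow] at this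
              exact this

noncomputable def qC (q y : ℂ) : ℝ :=
  Real.exp (Complex.abs y / (1 - Complex.abs q)) *
    Real.exp (Complex.abs q / (1 - Complex.abs q) ^ 2)

lemma qC_pos (q y : ℂ) : 0 < qC q y := mul_pos (Real.exp_pos _) (Real.exp_pos _)

lemma qQ_ne_zero {q : ℂ} (hq : Complex.abs q < 1) (k : ℕ) : qPochC q q k ≠ 0 := by
  have h := qpoch_lower hq k
  intro h0
  rw [h0] at h
  simp at h
  exact absurd h (not_le.mpr (Real.exp_pos _))

lemma qc_bound {q : ℂ} (y : ℂ) (hq : Complex.abs q < 1) (k : ℕ) :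
    Complex.abs (qPochC y q k / qPochC q q k) ≤ qC q y := by
  rw [map_div₀]
  have h1 : Complex.abs (qPochC y q k) / Complex.abs (qPochC q q k) ≤
      Real.exp (Complex.abs y / (1 - Complex.abs q)) /
        Real.exp (-(Complex.abs q / (1 - Complex.abs q) ^ 2)) := by
    apply div_le_div₀ (Real.exp_pos _).le (qpoch_upper y hq k)
      (Real.exp_pos _) (qpoch_lower hq k)
  calc Complex.abs (qPochC y q k) / Complex.abs (qPochC q q k) ≤ _ := h1
    _ = qC q y := by rw [Real.exp_neg, div_eq_mul_inv, inv_inv, qC]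

lemma qsummable {q : ℂ} (y : ℂ) (hq : Complex.abs q < 1) {z : ℂ} (hz : Complex.abs z < 1) :
    Summable (fun k : ℕ => z ^ k * (qPochC y q k / qPochC q q k)) := by
  apply Summable.of_norm_bounded (g := fun k => qC q y * Complex.abs z ^ k)
    (((summable_geometric_of_lt_one (Complex.abs.nonneg z) hz)).mul_left _)
  intro k
  rw [Complex.norm_eq_abs, map_mul, map_pow]
  rw [mul_comm (qC q y)]
  exact mul_le_mul_of_nonneg_left (qc_bound y hq k) (pow_nonneg (Complex.abs.nonneg z) k)

noncomputable def qF (q y z : ℂ) : ℂ := ∑' k : ℕ, z ^ k * (qPochC y q k / qPochC q q k)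

lemma qF_sub_one {q : ℂ} (y : ℂ) (hq : Complex.abs q < 1) {z : ℂ} (hz : Complex.abs z < 1) :
    Complex.abs (qF q y z - 1) ≤ qC q y * Complex.abs z * (1 - Complex.abs z)⁻¹ := by
  have hs := qsummable y hq hz (q := q)
  have h0 : qF q y z = 1 + ∑' k : ℕ, z ^ (k + 1) * (qPochC y q (k + 1) / qPochC q q (k + 1)) := by
    rw [qF, Summable.tsum_eq_zero_add hs]
    congr 1
    simp [qPochC]
  rw [h0, add_sub_cancel_left]
  have hb : HasSum (fun k : ℕ => (qC q y * Complex.abs z) * Complex.abs z ^ k)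
      (qC q y * Complex.abs z * (1 - Complex.abs z)⁻¹) :=
    (hasSum_geometric_of_lt_one (Complex.abs.nonneg z) hz).mul_left _
  rw [← Complex.norm_eq_abs]
  apply tsum_of_norm_bounded hb
  intro k
  rw [Complex.norm_eq_abs, map_mul, map_pow]
  calc Complex.abs z ^ (k + 1) * Complex.abs (qPochC y q (k+1) / qPochC q q (k+1))
      ≤ Complex.abs z ^ (k + 1) * qC q y :=
        mul_le_mul_of_nonneg_left (qc_bound y hq (k+1)) (pow_nonneg (Complex.abs.nonneg z) _)
    _ = qC q y * Complex.abs z * Complex.abs z ^ k := by ring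

lemma qrec {q : ℂ} (y : ℂ) (hq : Complex.abs q < 1) (k : ℕ) :
    qPochC y q (k + 1) / qPochC q q (k + 1) * (1 - q * q ^ k) =
      qPochC y q k / qPochC q q k * (1 - y * q ^ k) := by
  have hf : (1 : ℂ) - q * q ^ k ≠ 0 := qfac_ne_zero hq hq k
  have hQ : qPochC q q k ≠ 0 := qQ_ne_zero hq k
  have e1 : qPochC y q (k + 1) = qPochC y q k * (1 - y * q ^ k) := by
    simp [qPochC, Finset.prod_range_succ]
  have e2 : qPochC q q (k + 1) = qPochC q q k * (1 - q * q ^ k) := by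
    simp [qPochC, Finset.prod_range_succ]
  rw [e1, e2]
  rw [← div_div, div_mul_cancel₀ _ hf]
  ring

lemma qfun {q : ℂ} (y : ℂ) (hq : Complex.abs q < 1) {z : ℂ} (hz : Complex.abs z < 1) :
    qF q y z * (1 - z) = qF q y (q * z) * (1 - y * z) := by
  have hqz : Complex.abs (q * z) < 1 := by
    rw [map_mul]
    calc Complex.abs q * Complex.abs z ≤ 1 * Complex.abs z :=
          mul_le_mul_of_nonneg_right hq.le (Complex.abs.nonneg z)
      _ = Complex.abs z := one_mul _
      _ < 1 := hz
  have hA : HasSum (fun k : ℕ => z ^ k * (qPochC y q k / qPochC q q k)) (qF q y z) :=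
    (qsummable y hq hz).hasSum
  have hB : HasSum (fun k : ℕ => (q * z) ^ k * (qPochC y q k / qPochC q q k)) (qF q y (q * z)) :=
    (qsummable y hq hqz).hasSum
  have h1 : HasSum (fun k : ℕ => z ^ k * (qPochC y q k / qPochC q q k)
      - (q * z) ^ k * (qPochC y q k / qPochC q q k)) (qF q y z - qF q y (q * z)) := hA.sub hB
  have h2 : HasSum (fun k : ℕ => z ^ (k + 1) * (qPochC y q (k + 1) / qPochC q q (k + 1))
      - (q * z) ^ (k + 1) * (qPochC y q (k + 1) / qPochC q q (k + 1)))
      (qF q y z - qF q y (q * z)) := by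
    have h2' := (hasSum_nat_add_iff' (f := fun k : ℕ => z ^ k * (qPochC y q k / qPochC q q k)
      - (q * z) ^ k * (qPochC y q k / qPochC q q k)) 1).mpr h1
    simpa using h2'
  have h3 : ∀ k : ℕ, z ^ (k + 1) * (qPochC y q (k + 1) / qPochC q q (k + 1))
      - (q * z) ^ (k + 1) * (qPochC y q (k + 1) / qPochC q q (k + 1))
      = z * (z ^ k * (qPochC y q k / qPochC q q k))
        - (y * z) * ((q * z) ^ k * (qPochC y q k / qPochC q q k)) := by
    intro k
    have e : z ^ (k + 1) * (qPochC y q (k + 1) / qPochC q q (k + 1))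
        - (q * z) ^ (k + 1) * (qPochC y q (k + 1) / qPochC q q (k + 1))
        = z ^ (k + 1) * (qPochC y q (k + 1) / qPochC q q (k + 1) * (1 - q * q ^ k)) := by
      ring
    rw [e, qrec y hq k]
    ring
  have h4 : HasSum (fun k : ℕ => z * (z ^ k * (qPochC y q k / qPochC q q k))
      - (y * z) * ((q * z) ^ k * (qPochC y q k / qPochC q q k)))
      (z * qF q y z - (y * z) * qF q y (q * z)) := (hA.mul_left z).sub (hB.mul_left (y * z))
  rw [show (fun k : ℕ => z ^ (k + 1) * (qPochC y q (k + 1) / qPochC q q (k + 1))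
      - (q * z) ^ (k + 1) * (qPochC y q (k + 1) / qPochC q q (k + 1)))
      = (fun k : ℕ => z * (z ^ k * (qPochC y q k / qPochC q q k))
        - (y * z) * ((q * z) ^ k * (qPochC y q k / qPochC q q k))) from funext h3] at h2
  have h5 := h2.unique h4
  linear_combination h5

lemma qiter {q x : ℂ} (y : ℂ) (hq : Complex.abs q < 1) (hx : Complex.abs x < 1) (n : ℕ) :
    qF q y x * ∏ i ∈ Finset.range n, (1 - x * q ^ i) =
      qF q y (q ^ n * x) * ∏ i ∈ Finset.range n, (1 - y * x * q ^ i) := by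
  induction n with
  | zero => simp
  | succ n ih =>
    have hz : Complex.abs (q ^ n * x) < 1 := by
      rw [map_mul, map_pow]
      calc Complex.abs q ^ n * Complex.abs x ≤ 1 * Complex.abs x :=
            mul_le_mul_of_nonneg_right (pow_le_one₀ (Complex.abs.nonneg q) hq.le)
              (Complex.abs.nonneg x)
        _ = Complex.abs x := one_mul _
        _ < 1 := hx
    calc qF q y x * ∏ i ∈ Finset.range (n + 1), (1 - x * q ^ i)
        = (qF q y x * ∏ i ∈ Finset.range n, (1 - x * q ^ i)) * (1 - x * q ^ n) := by
          rw [Finset.prod_range_succ]; ring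
      _ = (qF q y (q ^ n * x) * ∏ i ∈ Finset.range n, (1 - y * x * q ^ i)) * (1 - x * q ^ n) := by
          rw [ih]
      _ = (qF q y (q ^ n * x) * (1 - q ^ n * x)) * ∏ i ∈ Finset.range n, (1 - y * x * q ^ i) := by
          ring
      _ = (qF q y (q * (q ^ n * x)) * (1 - y * (q ^ n * x)))
            * ∏ i ∈ Finset.range n, (1 - y * x * q ^ i) := by rw [qfun y hq hz]
      _ = qF q y (q ^ (n + 1) * x) * ∏ i ∈ Finset.range (n + 1), (1 - y * x * q ^ i) := by
          rw [Finset.prod_range_succ, show q * (q ^ n * x) = q ^ (n + 1) * x by ring]; ring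

/-- The q-binomial theorem: for `|q| < 1`, `|x| < 1`,
`Σ_{k≥0} x^k (y;q)_k/(q;q)_k = (yx;q)_∞/(x;q)_∞`, convergence of the infinite products
and the series being part of the statement. -/
theorem stmt1 (q x y : ℂ) (hq : ‖q‖ < 1) (hx : ‖x‖ < 1) :
    Multipliable (fun i : ℕ => 1 - y * x * q ^ i) ∧
    Multipliable (fun i : ℕ => 1 - x * q ^ i) ∧
    HasSum (fun k : ℕ => x ^ k * qPochC y q k / qPochC q q k)
      ((∏' i : ℕ, (1 - y * x * q ^ i)) / (∏' i : ℕ, (1 - x * q ^ i))) := by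
  obtain ⟨m2, hP2⟩ := qmult_aux hq (qfac_ne_zero hq hx)
  have m1 : Multipliable (fun i : ℕ => 1 - y * x * q ^ i) := qmultipliable (y * x) hq
  refine ⟨m1, m2, ?_⟩
  have hF0 : Filter.Tendsto (fun n : ℕ => qF q y (q ^ n * x)) Filter.atTop (nhds 1) := by
    rw [tendsto_iff_norm_sub_tendsto_zero]
    apply squeeze_zero (fun n => norm_nonneg _)
      (g := fun n => (qC q y * Complex.abs x * (1 - Complex.abs x)⁻¹) * Complex.abs q ^ n)
    · intro n
      have hzn : Complex.abs (q ^ n * x) ≤ Complex.abs x * Complex.abs q ^ n := by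
        rw [map_mul, map_pow]; ring_nf; exact le_refl _
      have hz : Complex.abs (q ^ n * x) < 1 := by
        calc Complex.abs (q ^ n * x) ≤ Complex.abs x * Complex.abs q ^ n := hzn
          _ ≤ Complex.abs x * 1 :=
              mul_le_mul_of_nonneg_left (pow_le_one₀ (Complex.abs.nonneg q) hq.le)
                (Complex.abs.nonneg x)
          _ = Complex.abs x := mul_one _
          _ < 1 := hx
      have hb := qF_sub_one y hq hz
      rw [Complex.norm_eq_abs]
      refine le_trans hb ?_
      have hinv : (1 - Complex.abs (q ^ n * x))⁻¹ ≤ (1 - Complex.abs x)⁻¹ := by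
        apply inv_anti₀ (by linarith [show Complex.abs x < 1 from hx])
        have : Complex.abs (q ^ n * x) ≤ Complex.abs x := by
          calc Complex.abs (q ^ n * x) ≤ Complex.abs x * Complex.abs q ^ n := hzn
            _ ≤ Complex.abs x * 1 :=
                mul_le_mul_of_nonneg_left (pow_le_one₀ (Complex.abs.nonneg q) hq.le)
                  (Complex.abs.nonneg x)
            _ = Complex.abs x := mul_one _
        linarith
      calc qC q y * Complex.abs (q ^ n * x) * (1 - Complex.abs (q ^ n * x))⁻¹
          ≤ qC q y * (Complex.abs x * Complex.abs q ^ n) * (1 - Complex.abs x)⁻¹ := by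
            have h1z : (0:ℝ) ≤ 1 - Complex.abs (q ^ n * x) := by linarith
            exact mul_le_mul (mul_le_mul_of_nonneg_left hzn (qC_pos q y).le) hinv
              (inv_nonneg.mpr h1z) (mul_nonneg (qC_pos q y).le (by positivity))
        _ = qC q y * Complex.abs x * (1 - Complex.abs x)⁻¹ * Complex.abs q ^ n := by ring
    · simpa using
        (tendsto_pow_atTop_nhds_zero_of_lt_one (Complex.abs.nonneg q) hq).const_mul
          (qC q y * Complex.abs x * (1 - Complex.abs x)⁻¹)
  have hten1 : Filter.Tendsto (fun n : ℕ => qF q y x * ∏ i ∈ Finset.range n, (1 - x * q ^ i))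
      Filter.atTop (nhds (qF q y x * ∏' i : ℕ, (1 - x * q ^ i))) :=
    (m2.hasProd.tendsto_prod_nat).const_mul _
  have hten2 : Filter.Tendsto
      (fun n : ℕ => qF q y (q ^ n * x) * ∏ i ∈ Finset.range n, (1 - y * x * q ^ i))
      Filter.atTop (nhds (1 * ∏' i : ℕ, (1 - y * x * q ^ i))) :=
    hF0.mul (m1.hasProd.tendsto_prod_nat)
  have heq : qF q y x * ∏' i : ℕ, (1 - x * q ^ i) = 1 * ∏' i : ℕ, (1 - y * x * q ^ i) :=
    tendsto_nhds_unique (hten1.congr (fun n => qiter y hq hx n)) hten2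
  have hFval : qF q y x = (∏' i : ℕ, (1 - y * x * q ^ i)) / (∏' i : ℕ, (1 - x * q ^ i)) := by
    rw [eq_div_iff hP2, heq, one_mul]
  have hsum : HasSum (fun k : ℕ => x ^ k * (qPochC y q k / qPochC q q k)) (qF q y x) :=
    (qsummable y hq hx).hasSum
  rw [hFval] at hsum
  convert hsum using 2 with k
  rw [mul_div_assoc]
end

section
/- Fix θ > 0 and real parameters ω < ρ < σ < θ, and an integer d ≥ 3. Define h(z) = (Ψ_1(θ-ρ) - Ψ_1(θ-ω))(ln Γ(z-ρ) - ln Γ(z-σ) - zΨ(θ-ρ) + zΨ(θ-σ)) + (Ψ_1(θ-σ) - Ψ_1(θ-ρ))(ln Γ(z-ρ) - ln Γ(z-ω) - zΨ(θ-ρ) + zΨ(θ-ω)). Then (-1)^{d+1} h^{(d)}(θ) > 0. -/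
/-- `ln Γ(z)`. -/
noncomputable def logGamma (z : ℝ) : ℝ := Real.log (Real.Gamma z)

/-- The digamma function `Ψ = (ln Γ)'`. -/
noncomputable def digamma : ℝ → ℝ := deriv logGamma

/-- The trigamma function `Ψ_1 = (ln Γ)''`. -/
noncomputable def trigamma : ℝ → ℝ := iteratedDeriv 2 logGamma

section Stmt5AuxSection
open Filter Topology Set

namespace Stmt5Aux


noncomputable def S (p : ℕ) (x : ℝ) : ℝ := ∑' n : ℕ, ((x + n) ^ p)⁻¹

lemma summable_S {x : ℝ} (hx : 0 < x) {p : ℕ} (hp : 2 ≤ p) :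
    Summable fun n : ℕ => ((x + n) ^ p)⁻¹ := by
  have h0 : Summable fun n : ℕ => 1 / (n : ℝ) ^ p := Real.summable_one_div_nat_pow.mpr hp
  have h1 : Summable fun n : ℕ => 1 / ((n : ℝ) + 1) ^ p := by
    have := (summable_nat_add_iff (f := fun n : ℕ => 1 / (n : ℝ) ^ p) 1).mpr h0
    simpa using this
  rw [← summable_nat_add_iff 1]
  refine h1.of_nonneg_of_le (fun n => by positivity) (fun n => ?_)
  rw [one_div]
  have hb : (0:ℝ) < (n:ℝ) + 1 := by positivity
  refine inv_anti₀ (by positivity) ?_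
  refine pow_le_pow_left₀ (by positivity) (by push_cast; linarith) p

lemma S_pos {x : ℝ} (hx : 0 < x) {p : ℕ} (hp : 2 ≤ p) : 0 < S p x := by
  have h := summable_S hx hp
  refine Summable.tsum_pos h (fun n => by positivity) 0 ?_
  have : (0:ℝ) < x + (0:ℕ) := by simpa using hx
  positivity

lemma S_lt_S {x y : ℝ} (hx : 0 < x) (hxy : x < y) {p : ℕ} (hp : 2 ≤ p) :
    S p y < S p x := by
  have hy : 0 < y := hx.trans hxy
  refine Summable.tsum_lt_tsum (i := 0) (fun n => ?_) ?_ (summable_S hy hp) (summable_S hx hp)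
  · have h1 : (0:ℝ) < x + n := by positivity
    refine inv_anti₀ (by positivity) ?_
    exact pow_le_pow_left₀ (by positivity) (by linarith) p
  · have h1 : (0:ℝ) < x + (0:ℕ) := by simpa using hx
    have h2 : (0:ℝ) < y + (0:ℕ) := by simpa using hy
    refine inv_strictAnti₀ (by positivity) ?_
    have hp0 : p ≠ 0 := by omega
    refine pow_lt_pow_left₀ ?_ (by positivity) hp0
    push_cast; linarith




/-- derivative of a single term -/
lemma hasDerivAt_term (p : ℕ) (n : ℕ) {y : ℝ} (hy : 0 < y + n) :
    HasDerivAt (fun z : ℝ => ((z + n) ^ p)⁻¹) (-(p:ℝ) * ((y + n) ^ (p+1))⁻¹) y := by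
  have h1 : HasDerivAt (fun z : ℝ => z + n) 1 y := (hasDerivAt_id y).add_const _
  have h2 : HasDerivAt (fun w : ℝ => w ^ (-(p:ℤ))) (((-(p:ℤ) : ℤ) : ℝ) * (y + n) ^ (-(p:ℤ) - 1)) (y + n) := by
    exact_mod_cast hasDerivAt_zpow (-(p:ℤ)) _ (Or.inl hy.ne')
  have h3 := (h2.comp y h1)
  simp only [mul_one] at h3
  have e1 : ∀ z : ℝ, 0 < z + n → (z + (n:ℝ)) ^ (-(p:ℤ)) = ((z + n) ^ p)⁻¹ := by
    intro z hz; rw [zpow_neg, zpow_natCast]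
  have e2 : ((-(p:ℤ) : ℤ) : ℝ) * (y + n) ^ (-(p:ℤ) - 1) = -(p:ℝ) * ((y + n) ^ (p+1))⁻¹ := by
    have : (-(p:ℤ) - 1 : ℤ) = -((p+1 : ℕ) : ℤ) := by push_cast; ring
    rw [this, zpow_neg, zpow_natCast]; push_cast; ring
  rw [← e2]
  refine h3.congr_of_eventuallyEq ?_
  filter_upwards [eventually_gt_nhds (show -(n:ℝ) < y by linarith)] with z hz
  exact (e1 z (by linarith)).symm

lemma hasDerivAt_S {p : ℕ} (hp : 2 ≤ p) {x : ℝ} (hx : 0 < x) :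
    HasDerivAt (S p) (-(p:ℝ) * S (p+1) x) x := by
  have hx2 : 0 < x / 2 := by linarith
  have key : HasDerivAt (fun z : ℝ => ∑' n : ℕ, ((z + n) ^ p)⁻¹)
      (∑' n : ℕ, (-(p:ℝ) * ((x + n) ^ (p+1))⁻¹)) x := by
    refine hasDerivAt_tsum_of_isPreconnected
      (g := fun (n : ℕ) (z : ℝ) => ((z + n) ^ p)⁻¹)
      (g' := fun (n : ℕ) (z : ℝ) => -(p:ℝ) * ((z + n) ^ (p+1))⁻¹)
      (u := fun n : ℕ => (p:ℝ) * ((x/2 + n) ^ (p+1))⁻¹) (y₀ := x)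
      (((summable_S hx2 (by omega)).mul_left _)) (isOpen_Ioo (a := x/2) (b := x+1))
      (isPreconnected_Ioo) (fun n y hy => ?_) (fun n y hy => ?_) ?_ ?_ ?_
    · refine hasDerivAt_term p n ?_
      have h0 : 0 < y := lt_trans hx2 hy.1
      positivity
    · rcases hy with ⟨h1, h2⟩
      have h0 : 0 < y := lt_trans hx2 h1
      have hyn : (0:ℝ) < y + n := by positivity
      rw [norm_mul, norm_neg, Real.norm_natCast, norm_inv, Real.norm_of_nonneg (by positivity)]
      refine mul_le_mul_of_nonneg_left ?_ (by positivity)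
      refine inv_anti₀ (by positivity) ?_
      exact pow_le_pow_left₀ (by positivity) (by linarith) _
    · exact ⟨by linarith, by linarith⟩
    · exact summable_S hx hp
    · exact ⟨by linarith, by linarith⟩
  rw [tsum_mul_left] at key
  exact key




lemma sq_S_le {x : ℝ} (hx : 0 < x) {p : ℕ} (hp : 2 ≤ p) :
    S (p+1) x ^ 2 ≤ S p x * S (p+2) x := by
  have hf := summable_S hx hp
  have hr := summable_S hx (show 2 ≤ p + 1 by omega)
  have hg := summable_S hx (show 2 ≤ p + 2 by omega)
  have key : ∀ N : ℕ, (∑ n ∈ Finset.range N, ((x + n) ^ (p+1))⁻¹) ^ 2 ≤ S p x * S (p+2) x := by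
    intro N
    have h1 := Finset.sum_sq_le_sum_mul_sum_of_sq_eq_mul (Finset.range N)
      (r := fun n : ℕ => ((x + n) ^ (p+1))⁻¹)
      (f := fun n : ℕ => ((x + n) ^ p)⁻¹)
      (g := fun n : ℕ => ((x + n) ^ (p+2))⁻¹)
      (fun i _ => by positivity) (fun i _ => by positivity)
      (fun i _ => by
        have hxi : (0:ℝ) < x + i := by positivity
        simp only [← mul_inv, ← pow_add, ← inv_pow, ← pow_mul]
        congr 1
        omega)
    refine h1.trans (mul_le_mul ?_ ?_ (Finset.sum_nonneg fun i _ => by positivity) (S_pos hx hp).le)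
    · exact Summable.sum_le_tsum _ (fun i _ => by positivity) hf
    · exact Summable.sum_le_tsum _ (fun i _ => by positivity) hg
  have htend : Tendsto (fun N => (∑ n ∈ Finset.range N, ((x + n) ^ (p+1))⁻¹) ^ 2) atTop
      (𝓝 (S (p+1) x ^ 2)) := (hr.hasSum.tendsto_sum_nat).pow 2
  exact le_of_tendsto htend (Eventually.of_forall key)

/-- chain of Cauchy-Schwarz: for `2 ≤ q ≤ p`, `S_{q+1} S_p ≤ S_{p+1} S_q`. -/
lemma chain_S {x : ℝ} (hx : 0 < x) {q p : ℕ} (hq : 2 ≤ q) (hqp : q ≤ p) :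
    S (q+1) x * S p x ≤ S (p+1) x * S q x := by
  induction p, hqp using Nat.le_induction with
  | base => rw [mul_comm]
  | succ p hqp ih =>
    have hcs := sq_S_le hx (show 2 ≤ p by omega)
    have hSp := S_pos hx (show 2 ≤ p by omega)
    have hSp1 := S_pos hx (show 2 ≤ p + 1 by omega)
    have hSq1 := S_pos hx (show 2 ≤ q + 1 by omega)
    have hSq := S_pos hx hq
    nlinarith [mul_le_mul ih hcs (by positivity) (by positivity)]

/-- `S p / S q` is strictly decreasing for `p > q ≥ 2`:
cross-multiplied version. -/
lemma ratio_strictAnti {q p : ℕ} (hq : 2 ≤ q) (hqp : q < p) {u v : ℝ}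
    (hu : 0 < u) (huv : u < v) : S p v * S q u < S p u * S q v := by
  have hp2 : 2 ≤ p := by omega
  set F : ℝ → ℝ := fun x => S p x / S q x with hF
  have hder : ∀ x ∈ Ioi (0:ℝ), HasDerivAt F
      ((-(p:ℝ) * S (p+1) x * S q x - S p x * (-(q:ℝ) * S (q+1) x)) / S q x ^ 2) x := by
    intro x hx
    exact (hasDerivAt_S hp2 hx).div (hasDerivAt_S hq hx) (S_pos hx hq).ne'
  have hneg : ∀ x ∈ Ioi (0:ℝ),
      (-(p:ℝ) * S (p+1) x * S q x - S p x * (-(q:ℝ) * S (q+1) x)) / S q x ^ 2 < 0 := by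
    intro x hx
    have hSq := S_pos hx hq
    have hSp := S_pos hx hp2
    have hSq1 := S_pos hx (show 2 ≤ q + 1 by omega)
    have hSp1 := S_pos hx (show 2 ≤ p + 1 by omega)
    have hchain := chain_S hx hq hqp.le
    have hnum : -(p:ℝ) * S (p+1) x * S q x - S p x * (-(q:ℝ) * S (q+1) x) < 0 := by
      have h1 : (q:ℝ) * (S (q+1) x * S p x) ≤ (q:ℝ) * (S (p+1) x * S q x) := by
        exact mul_le_mul_of_nonneg_left hchain (by positivity)
      have h2 : (q:ℝ) * (S (p+1) x * S q x) < (p:ℝ) * (S (p+1) x * S q x) := by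
        refine mul_lt_mul_of_pos_right ?_ (by positivity)
        exact_mod_cast hqp
      nlinarith
    exact div_neg_of_neg_of_pos hnum (by positivity)
  have hanti : StrictAntiOn F (Icc u v) := by
    refine strictAntiOn_of_deriv_neg (convex_Icc u v) ?_ ?_
    · intro x hx
      have hx0 : (0:ℝ) < x := lt_of_lt_of_le hu hx.1
      exact ((hder x hx0).continuousAt).continuousWithinAt
    · intro x hx
      rw [interior_Icc] at hx
      have hx0 : (0:ℝ) < x := lt_trans hu hx.1
      rw [(hder x hx0).deriv]
      exact hneg x hx0
  have := hanti (left_mem_Icc.mpr huv.le) (right_mem_Icc.mpr huv.le) huv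
  rw [hF] at this
  have hv : 0 < v := hu.trans huv
  rw [div_lt_div_iff₀ (S_pos hv hq) (S_pos hu hq)] at this
  linarith [this]




/-- the function that will be `deriv logGamma`. -/
noncomputable def psi (x : ℝ) : ℝ :=
  -Real.eulerMascheroniConstant + ∑' m : ℕ, (((m:ℝ) + 1)⁻¹ - (x + m)⁻¹)

lemma term_bound {c : ℝ} (hc : 0 < c) (hc1 : c ≤ 1) {y : ℝ} (hcy : c ≤ y) {R : ℝ}
    (hyR : |y - 1| ≤ R) (m : ℕ) :
    ‖((m:ℝ) + 1)⁻¹ - (y + m)⁻¹‖ ≤ R * ((c + m) ^ 2)⁻¹ := by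
  have hy : 0 < y := lt_of_lt_of_le hc hcy
  have h1 : (0:ℝ) < (m:ℝ) + 1 := by positivity
  have h2 : (0:ℝ) < y + m := by positivity
  have hcm : (0:ℝ) < c + m := by positivity
  have key : ((m:ℝ) + 1)⁻¹ - (y + m)⁻¹ = (y - 1) * (((m:ℝ) + 1) * (y + m))⁻¹ := by
    field_simp
    ring
  rw [key, norm_mul, norm_inv]
  have hb1 : (c + m) ^ 2 ≤ ((m:ℝ) + 1) * (y + m) := by
    have e1 : c + (m:ℝ) ≤ (m:ℝ) + 1 := by linarith
    have e2 : c + (m:ℝ) ≤ y + m := by linarith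
    nlinarith
  calc ‖y - 1‖ * ‖((m:ℝ) + 1) * (y + m)‖⁻¹
      ≤ R * ((c + m) ^ 2)⁻¹ := by
        refine mul_le_mul ?_ ?_ (by positivity) (le_trans (abs_nonneg _) hyR)
        · simpa [Real.norm_eq_abs] using hyR
        · rw [Real.norm_of_nonneg (by positivity)]
          exact inv_anti₀ (by positivity) hb1

lemma summable_term {x : ℝ} (hx : 0 < x) :
    Summable fun m : ℕ => (((m:ℝ) + 1)⁻¹ - (x + m)⁻¹) := by
  set c := min x 1 with hc
  have hc0 : 0 < c := lt_min hx one_pos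
  refine Summable.of_norm ?_
  refine Summable.of_nonneg_of_le (fun m => norm_nonneg _)
    (fun m => term_bound hc0 (min_le_right _ _) (min_le_left _ _) (le_refl |x - 1|) m) ?_
  exact (summable_S hc0 le_rfl).mul_left _

/-- `logGammaSeq` has derivative `log n - ∑_{m ≤ n} (x+m)⁻¹`. -/
lemma hasDerivAt_logGammaSeq (n : ℕ) {x : ℝ} (hx : 0 < x) :
    HasDerivAt (fun z => Real.BohrMollerup.logGammaSeq z n)
      (Real.log n - ∑ m ∈ Finset.range (n + 1), (x + m)⁻¹) x := by
  unfold Real.BohrMollerup.logGammaSeq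
  have h1 : HasDerivAt (fun z : ℝ => z * Real.log n + Real.log (Nat.factorial n))
      (Real.log n) x := by
    simpa using ((hasDerivAt_id x).mul_const (Real.log n)).add_const (Real.log (Nat.factorial n))
  have h2 : HasDerivAt (fun z : ℝ => ∑ m ∈ Finset.range (n + 1), Real.log (z + m))
      (∑ m ∈ Finset.range (n + 1), (x + m)⁻¹) x := by
    refine HasDerivAt.fun_sum (fun m _ => ?_)
    have hxm : (0:ℝ) < x + m := by positivity
    have := (Real.hasDerivAt_log hxm.ne').comp x ((hasDerivAt_id x).add_const (m:ℝ))
    simpa [Function.comp_def] using this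
  simpa [mul_comm] using h1.fun_sub h2

lemma c_tendsto :
    Tendsto (fun n : ℕ => Real.log n - ∑ m ∈ Finset.range (n + 1), ((m:ℝ) + 1)⁻¹) atTop
      (𝓝 (-Real.eulerMascheroniConstant)) := by
  have hharm : ∀ n : ℕ, (∑ m ∈ Finset.range (n + 1), ((m:ℝ) + 1)⁻¹) = (harmonic (n+1) : ℝ) := by
    intro n
    rw [harmonic]
    push_cast
    exact Finset.sum_congr rfl (fun i _ => by norm_num)
  have h1 : Tendsto (fun n : ℕ => ((harmonic (n+1) : ℝ) - Real.log ((n:ℝ) + 2)))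
      atTop (𝓝 Real.eulerMascheroniConstant) := by
    have := Real.tendsto_eulerMascheroniSeq.comp (tendsto_add_atTop_nat 1)
    refine this.congr (fun n => ?_)
    simp [Real.eulerMascheroniSeq]
    norm_num
    push_cast
    ring_nf
  have h2 : Tendsto (fun n : ℕ => Real.log ((n:ℝ) + 2) - Real.log n) atTop (𝓝 0) := by
    have h3 : Tendsto (fun n : ℕ => ((n:ℝ) + 2) / n) atTop (𝓝 1) := by
      have := Tendsto.add (tendsto_const_nhds (x := (1:ℝ)))
        ((tendsto_const_nhds (x := (2:ℝ))).div_atTop tendsto_natCast_atTop_atTop)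
      simp only [add_zero] at this
      refine this.congr' ?_
      filter_upwards [eventually_gt_atTop 0] with n hn
      field_simp
    have h4 := (Real.continuousAt_log one_ne_zero).tendsto.comp h3
    simp only [Function.comp, Real.log_one] at h4
    refine h4.congr' ?_
    filter_upwards [eventually_gt_atTop 0] with n hn
    have hn' : (0:ℝ) < n := by exact_mod_cast hn
    simp only [Function.comp]
    rw [Real.log_div (by positivity) (by positivity)]
  have := (h1.add h2).neg
  simp only [neg_add_rev] at this
  refine this.congr' ?_ |>.mono_right (le_of_eq ?_)
  · filter_upwards [eventually_gt_atTop 0] with n hn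
    rw [hharm n]
    push_cast
    ring
  · congr 1
    ring


/-- uniform convergence of the derivatives of `logGammaSeq` on `Ioo (x/2) (x+1)`. -/
lemma unif_conv {x : ℝ} (hx : 0 < x) :
    TendstoUniformlyOn
      (fun (n : ℕ) (y : ℝ) => Real.log n - ∑ m ∈ Finset.range (n + 1), (y + m)⁻¹)
      psi atTop (Ioo (x/2) (x+1)) := by
  set c : ℝ := min (x/2) 1 with hcdef
  have hc0 : 0 < c := lt_min (by linarith) one_pos
  have hc1 : c ≤ 1 := min_le_right _ _
  set u : ℕ → ℝ := fun m => (x + 2) * ((c + m) ^ 2)⁻¹ with hu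
  have hu_sum : Summable u := (summable_S hc0 le_rfl).mul_left _
  -- uniform convergence of the partial sums of the telescoped series
  have hsum : TendstoUniformlyOn
      (fun (N : ℕ) (y : ℝ) => ∑ m ∈ Finset.range N, (((m:ℝ) + 1)⁻¹ - (y + m)⁻¹))
      (fun y => ∑' m : ℕ, (((m:ℝ) + 1)⁻¹ - (y + m)⁻¹)) atTop (Ioo (x/2) (x+1)) := by
    refine tendstoUniformlyOn_tsum_nat hu_sum (fun m y hy => ?_)
    rcases hy with ⟨hy1, hy2⟩
    refine term_bound hc0 hc1 (le_trans (min_le_left _ _) hy1.le) ?_ m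
    rw [abs_le]
    constructor <;> linarith
  have hsum' : TendstoUniformlyOn
      (fun (n : ℕ) (y : ℝ) => ∑ m ∈ Finset.range (n + 1), (((m:ℝ) + 1)⁻¹ - (y + m)⁻¹))
      (fun y => ∑' m : ℕ, (((m:ℝ) + 1)⁻¹ - (y + m)⁻¹)) atTop (Ioo (x/2) (x+1)) :=
    fun v hv => (tendsto_add_atTop_nat 1).eventually (hsum v hv)
  have hconst : TendstoUniformlyOn
      (fun (n : ℕ) (_ : ℝ) => Real.log n - ∑ m ∈ Finset.range (n + 1), ((m:ℝ) + 1)⁻¹)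
      (fun _ => -Real.eulerMascheroniConstant) atTop (Ioo (x/2) (x+1)) := by
    intro v hv
    rcases Metric.mem_uniformity_dist.mp hv with ⟨ε, hε, hball⟩
    obtain ⟨N, hN⟩ := (Metric.tendsto_atTop.mp c_tendsto) ε hε
    filter_upwards [eventually_ge_atTop N] with n hn y _
    exact hball (by simpa [dist_comm] using hN n hn)
  have h5 := hconst.add hsum'
  have h6 := h5.congr (F' := fun (n : ℕ) (y : ℝ) =>
      Real.log n - ∑ m ∈ Finset.range (n + 1), (y + m)⁻¹)
    (Eventually.of_forall fun n y _ => by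
      simp only [Pi.add_apply]
      rw [Finset.sum_sub_distrib]
      ring)
  refine h6.congr_right (fun y _ => ?_)
  simp only [Pi.add_apply, psi]


lemma hasDerivAt_logGamma {x : ℝ} (hx : 0 < x) : HasDerivAt logGamma (psi x) x := by
  refine hasDerivAt_of_tendstoLocallyUniformlyOn (isOpen_Ioi (a := (0:ℝ)))
    (l := (atTop : Filter ℕ))
    (f := fun (n : ℕ) (z : ℝ) => Real.BohrMollerup.logGammaSeq z n)
    (f' := fun (n : ℕ) (y : ℝ) => Real.log n - ∑ m ∈ Finset.range (n + 1), (y + m)⁻¹)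
    ?_ ?_ ?_ hx
  · -- locally uniform convergence on Ioi 0
    intro v hv y hy
    simp only [mem_Ioi] at hy
    refine ⟨Ioo (y/2) (y+1), ?_, ?_⟩
    · exact mem_nhdsWithin_of_mem_nhds (Ioo_mem_nhds (by linarith) (by linarith))
    · exact unif_conv hy v hv
  · exact Eventually.of_forall fun n z hz => hasDerivAt_logGammaSeq n hz
  · intro z hz
    exact Real.BohrMollerup.tendsto_log_gamma hz

lemma hasDerivAt_psi {x : ℝ} (hx : 0 < x) : HasDerivAt psi (S 2 x) x := by
  have hx2 : 0 < x / 2 := by linarith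
  have hT : HasDerivAt (fun z : ℝ => ∑' m : ℕ, (((m:ℝ) + 1)⁻¹ - (z + m)⁻¹))
      (∑' m : ℕ, ((x + m) ^ 2)⁻¹) x := by
    refine hasDerivAt_tsum_of_isPreconnected
      (g := fun (m : ℕ) (z : ℝ) => ((m:ℝ) + 1)⁻¹ - (z + m)⁻¹)
      (g' := fun (m : ℕ) (z : ℝ) => ((z + m) ^ 2)⁻¹)
      (u := fun m : ℕ => ((x/2 + m) ^ 2)⁻¹) (y₀ := x)
      (summable_S hx2 le_rfl) (isOpen_Ioo (a := x/2) (b := x+1))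
      isPreconnected_Ioo (fun m y hy => ?_) (fun m y hy => ?_) ?_ ?_ ?_
    · have h0 : 0 < y := lt_trans hx2 hy.1
      have hym : (0:ℝ) < y + m := by positivity
      have h2 := ((hasDerivAt_id y).add_const (m:ℝ)).fun_inv hym.ne'
      have h3 := (hasDerivAt_const y (((m:ℝ) + 1)⁻¹)).fun_sub h2
      convert h3 using 1
      · simp only [id]
      · simp only [id]; ring
    · have h0 : 0 < y := lt_trans hx2 hy.1
      have hym : (0:ℝ) < y + m := by positivity
      rw [Real.norm_of_nonneg (by positivity)]
      refine inv_anti₀ (by positivity) ?_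
      exact pow_le_pow_left₀ (by positivity) (by linarith [hy.1]) _
    · exact ⟨by linarith, by linarith⟩
    · exact summable_term hx
    · exact ⟨by linarith, by linarith⟩
  have := (hasDerivAt_const x (-Real.eulerMascheroniConstant)).fun_add hT
  rw [zero_add] at this
  exact this

lemma deriv_logGamma_eq {x : ℝ} (hx : 0 < x) : deriv logGamma x = psi x :=
  (hasDerivAt_logGamma hx).deriv

lemma trigamma_eq {x : ℝ} (hx : 0 < x) : trigamma x = S 2 x := by
  have h1 : deriv logGamma =ᶠ[𝓝 x] psi := by
    filter_upwards [eventually_gt_nhds hx] with y hy using deriv_logGamma_eq hy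
  show iteratedDeriv 2 logGamma x = S 2 x
  rw [iteratedDeriv_succ, iteratedDeriv_one, h1.deriv_eq, (hasDerivAt_psi hx).deriv]



lemma hasDerivAt_logGamma_shift {c z : ℝ} (h : c < z) :
    HasDerivAt (fun w : ℝ => logGamma (w - c)) (psi (z - c)) z := by
  have h1 := (hasDerivAt_logGamma (sub_pos.mpr h)).comp z ((hasDerivAt_id z).sub_const c)
  simpa [Function.comp_def] using h1

lemma hasDerivAt_psi_shift {c z : ℝ} (h : c < z) :
    HasDerivAt (fun w : ℝ => psi (w - c)) (S 2 (z - c)) z := by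
  have h1 := (hasDerivAt_psi (sub_pos.mpr h)).comp z ((hasDerivAt_id z).sub_const c)
  simpa [Function.comp_def] using h1

lemma hasDerivAt_S_shift {p : ℕ} (hp : 2 ≤ p) {c z : ℝ} (h : c < z) :
    HasDerivAt (fun w : ℝ => S p (w - c)) (-(p:ℝ) * S (p+1) (z - c)) z := by
  have h1 := (hasDerivAt_S hp (sub_pos.mpr h)).comp z ((hasDerivAt_id z).sub_const c)
  simpa [Function.comp_def] using h1

lemma iteratedDeriv_h (A B k1 k2 k3 ρ σ ω : ℝ) (hωρ : ω < ρ) (hρσ : ρ < σ)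
    {d : ℕ} (hd : 2 ≤ d) :
    Set.EqOn (iteratedDeriv d (fun z : ℝ =>
        A * (logGamma (z - ρ) - logGamma (z - σ) - z * k1 + z * k2) +
        B * (logGamma (z - ρ) - logGamma (z - ω) - z * k1 + z * k3)))
      (fun z => (-1:ℝ)^d * (Nat.factorial (d-1)) *
        ((A+B) * S d (z - ρ) - A * S d (z - σ) - B * S d (z - ω)))
      (Ioi σ) := by
  set h : ℝ → ℝ := fun z =>
    A * (logGamma (z - ρ) - logGamma (z - σ) - z * k1 + z * k2) +
    B * (logGamma (z - ρ) - logGamma (z - ω) - z * k1 + z * k3) with hh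
  have hd1 : ∀ z ∈ Ioi σ, HasDerivAt h
      (A * (psi (z - ρ) - psi (z - σ) - k1 + k2) + B * (psi (z - ρ) - psi (z - ω) - k1 + k3)) z := by
    intro z hz
    simp only [mem_Ioi] at hz
    have hzρ : ρ < z := by linarith
    have hzω : ω < z := by linarith
    have t1 := hasDerivAt_logGamma_shift hzρ
    have t2 := hasDerivAt_logGamma_shift (show σ < z from hz)
    have t3 := hasDerivAt_logGamma_shift hzω
    have t4 : HasDerivAt (fun w : ℝ => w * k1) k1 z := by
      simpa using (hasDerivAt_id z).mul_const k1
    have t5 : HasDerivAt (fun w : ℝ => w * k2) k2 z := by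
      simpa using (hasDerivAt_id z).mul_const k2
    have t6 : HasDerivAt (fun w : ℝ => w * k3) k3 z := by
      simpa using (hasDerivAt_id z).mul_const k3
    exact ((((t1.sub t2).sub t4).add t5).const_mul A).add
      ((((t1.sub t3).sub t4).add t6).const_mul B)
  -- first derivative as function on Ioi σ
  have hderiv1 : Set.EqOn (deriv h)
      (fun z => A * (psi (z - ρ) - psi (z - σ) - k1 + k2) +
        B * (psi (z - ρ) - psi (z - ω) - k1 + k3)) (Ioi σ) :=
    fun z hz => (hd1 z hz).deriv
  induction d, hd using Nat.le_induction with
  | base =>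
    intro z hz
    simp only [mem_Ioi] at hz
    have hzρ : ρ < z := by linarith
    have hzω : ω < z := by linarith
    have heq : deriv h =ᶠ[𝓝 z] (fun w => A * (psi (w - ρ) - psi (w - σ) - k1 + k2) +
        B * (psi (w - ρ) - psi (w - ω) - k1 + k3)) := by
      filter_upwards [eventually_gt_nhds hz] with w hw using hderiv1 hw
    have h2 : HasDerivAt (fun w => A * (psi (w - ρ) - psi (w - σ) - k1 + k2) +
        B * (psi (w - ρ) - psi (w - ω) - k1 + k3))
        (A * (S 2 (z - ρ) - S 2 (z - σ)) + B * (S 2 (z - ρ) - S 2 (z - ω))) z := by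
      have t1 := hasDerivAt_psi_shift hzρ
      have t2 := hasDerivAt_psi_shift (show σ < z from hz)
      have t3 := hasDerivAt_psi_shift hzω
      have := ((((t1.fun_sub t2).sub_const k1).add_const k2).const_mul A).fun_add
        ((((t1.fun_sub t3).sub_const k1).add_const k3).const_mul B)
      convert this using 1
    show iteratedDeriv 2 h z = _
    rw [iteratedDeriv_succ, iteratedDeriv_one, heq.deriv_eq, h2.deriv]
    norm_num
    ring
  | succ d hd ih =>
    intro z hz
    simp only [mem_Ioi] at hz
    have hzρ : ρ < z := by linarith
    have hzω : ω < z := by linarith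
    have heq : iteratedDeriv d h =ᶠ[𝓝 z] (fun w => (-1:ℝ)^d * (Nat.factorial (d-1)) *
        ((A+B) * S d (w - ρ) - A * S d (w - σ) - B * S d (w - ω))) := by
      filter_upwards [eventually_gt_nhds hz] with w hw using ih hw
    have hd2 : 2 ≤ d := hd
    have t1 := hasDerivAt_S_shift hd2 hzρ
    have t2 := hasDerivAt_S_shift hd2 (show σ < z from hz)
    have t3 := hasDerivAt_S_shift hd2 hzω
    have h2 := ((((t1.const_mul (A+B)).fun_sub (t2.const_mul A)).fun_sub
      (t3.const_mul B)).const_mul ((-1:ℝ)^d * (Nat.factorial (d-1))))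
    rw [iteratedDeriv_succ, heq.deriv_eq, h2.deriv]
    have hfact : ((d:ℝ)) * (Nat.factorial (d-1) : ℝ) = (Nat.factorial d : ℝ) := by
      rw [← Nat.cast_mul]
      congr 1
      have : d - 1 + 1 = d := by omega
      calc d * (d-1).factorial = (d - 1 + 1) * (d-1).factorial := by rw [this]
        _ = (d - 1 + 1).factorial := rfl
        _ = d.factorial := by rw [this]
    have hd1' : (d + 1) - 1 = d := by omega
    rw [hd1']
    push_cast [← hfact]
    ring
end Stmt5Aux
end Stmt5AuxSection

/-- For `ω < ρ < σ < θ`, `θ > 0` and `d ≥ 3`, the function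
`h(z) = (Ψ_1(θ-ρ)-Ψ_1(θ-ω))(lnΓ(z-ρ)-lnΓ(z-σ)-zΨ(θ-ρ)+zΨ(θ-σ))
      + (Ψ_1(θ-σ)-Ψ_1(θ-ρ))(lnΓ(z-ρ)-lnΓ(z-ω)-zΨ(θ-ρ)+zΨ(θ-ω))`
satisfies `(-1)^{d+1} h^{(d)}(θ) > 0`. -/
theorem stmt5 (θ σ ρ ω : ℝ) (hθ : 0 < θ) (h1 : ω < ρ) (h2 : ρ < σ) (h3 : σ < θ)
    (d : ℕ) (hd : 3 ≤ d) :
    0 < (-1 : ℝ) ^ (d + 1) * iteratedDeriv d (fun z : ℝ =>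
      (trigamma (θ - ρ) - trigamma (θ - ω)) *
        (logGamma (z - ρ) - logGamma (z - σ) - z * digamma (θ - ρ) + z * digamma (θ - σ)) +
      (trigamma (θ - σ) - trigamma (θ - ρ)) *
        (logGamma (z - ρ) - logGamma (z - ω) - z * digamma (θ - ρ) + z * digamma (θ - ω))) θ := by
  have hθρ : 0 < θ - ρ := by linarith
  have hθσ : 0 < θ - σ := by linarith
  have hθω : 0 < θ - ω := by linarith
  have hmem : θ ∈ Set.Ioi σ := h3
  have key := Stmt5Aux.iteratedDeriv_h (trigamma (θ-ρ) - trigamma (θ-ω))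
    (trigamma (θ-σ) - trigamma (θ-ρ)) (digamma (θ-ρ)) (digamma (θ-σ)) (digamma (θ-ω))
    ρ σ ω h1 h2 (show 2 ≤ d by omega) hmem
  rw [key, Stmt5Aux.trigamma_eq hθρ, Stmt5Aux.trigamma_eq hθσ, Stmt5Aux.trigamma_eq hθω]
  set b : ℝ := θ - σ with hbdef
  set a : ℝ := θ - ρ with hadef
  set c : ℝ := θ - ω with hcdef
  have hb0 : 0 < b := hθσ
  have ha0 : 0 < a := hθρ
  have hc0 : 0 < c := hθω
  have hba : b < a := by rw [hbdef, hadef]; linarith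
  have hac : a < c := by rw [hadef, hcdef]; linarith
  have hd2 : 2 ≤ d := by omega
  set A : ℝ := Stmt5Aux.S 2 a - Stmt5Aux.S 2 c with hAdef
  set B : ℝ := Stmt5Aux.S 2 b - Stmt5Aux.S 2 a with hBdef
  have hApos : 0 < A := sub_pos.mpr (Stmt5Aux.S_lt_S ha0 hac le_rfl)
  have hBpos : 0 < B := sub_pos.mpr (Stmt5Aux.S_lt_S hb0 hba le_rfl)
  have hV : 0 < Stmt5Aux.S d b - Stmt5Aux.S d a := sub_pos.mpr (Stmt5Aux.S_lt_S hb0 hba hd2)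
  have hT : 0 < Stmt5Aux.S d a - Stmt5Aux.S d c := sub_pos.mpr (Stmt5Aux.S_lt_S ha0 hac hd2)
  -- Cauchy MVT on (b, a)
  have hcont : ∀ {p : ℕ}, 2 ≤ p → ∀ {u v : ℝ}, 0 < u → ContinuousOn (Stmt5Aux.S p) (Set.Icc u v) :=
    fun {p} hp {u v} hu x hx =>
      ((Stmt5Aux.hasDerivAt_S hp (lt_of_lt_of_le hu hx.1)).continuousAt).continuousWithinAt
  obtain ⟨ξ, hξ, hm1⟩ := exists_ratio_hasDerivAt_eq_ratio_slope
    (Stmt5Aux.S d) (fun x => -(d:ℝ) * Stmt5Aux.S (d+1) x) hba (hcont hd2 hb0)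
    (fun x hx => by
      have := Stmt5Aux.hasDerivAt_S hd2 (lt_trans hb0 hx.1)
      exact this)
    (Stmt5Aux.S 2) (fun x => -((2:ℕ):ℝ) * Stmt5Aux.S (2+1) x) (hcont le_rfl hb0)
    (fun x hx => Stmt5Aux.hasDerivAt_S le_rfl (lt_trans hb0 hx.1))
  obtain ⟨η, hη, hm2⟩ := exists_ratio_hasDerivAt_eq_ratio_slope
    (Stmt5Aux.S d) (fun x => -(d:ℝ) * Stmt5Aux.S (d+1) x) hac (hcont hd2 ha0)
    (fun x hx => by
      have := Stmt5Aux.hasDerivAt_S hd2 (lt_trans ha0 hx.1)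
      exact this)
    (Stmt5Aux.S 2) (fun x => -((2:ℕ):ℝ) * Stmt5Aux.S (2+1) x) (hcont le_rfl ha0)
    (fun x hx => Stmt5Aux.hasDerivAt_S le_rfl (lt_trans ha0 hx.1))
  have h23 : (2:ℕ) + 1 = 3 := rfl
  rw [h23] at hm1 hm2
  push_cast at hm1 hm2
  have hξ0 : 0 < ξ := lt_trans hb0 hξ.1
  have hη0 : 0 < η := lt_trans ha0 hη.1
  have hξη : ξ < η := lt_trans hξ.2 hη.1
  have hratio := Stmt5Aux.ratio_strictAnti (q := 3) (p := d + 1) (by norm_num) (by omega) hξ0 hξη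
  -- positivity facts
  have hS3ξ : 0 < Stmt5Aux.S 3 ξ := Stmt5Aux.S_pos hξ0 (by norm_num)
  have hS3η : 0 < Stmt5Aux.S 3 η := Stmt5Aux.S_pos hη0 (by norm_num)
  have hSd1ξ : 0 < Stmt5Aux.S (d+1) ξ := Stmt5Aux.S_pos hξ0 (by omega)
  have hSd1η : 0 < Stmt5Aux.S (d+1) η := Stmt5Aux.S_pos hη0 (by omega)
  -- rearranged MVT identities
  have e1 : B * ((d:ℝ) * Stmt5Aux.S (d+1) ξ)
      = (Stmt5Aux.S d b - Stmt5Aux.S d a) * (2 * Stmt5Aux.S 3 ξ) := by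
    rw [hBdef]; linear_combination hm1
  have e2 : A * ((d:ℝ) * Stmt5Aux.S (d+1) η)
      = (Stmt5Aux.S d a - Stmt5Aux.S d c) * (2 * Stmt5Aux.S 3 η) := by
    rw [hAdef]; linear_combination hm2
  have hdpos : (0:ℝ) < d := by positivity
  -- main inequality : B * T < A * V
  have main : B * (Stmt5Aux.S d a - Stmt5Aux.S d c) < A * (Stmt5Aux.S d b - Stmt5Aux.S d a) := by
    have e2' : B * (2 * Stmt5Aux.S 3 ξ) * (A * ((d:ℝ) * Stmt5Aux.S (d+1) η))
        = B * (2 * Stmt5Aux.S 3 ξ) * ((Stmt5Aux.S d a - Stmt5Aux.S d c) * (2 * Stmt5Aux.S 3 η)) := by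
      rw [e2]
    have e1' : A * (2 * Stmt5Aux.S 3 η) * (B * ((d:ℝ) * Stmt5Aux.S (d+1) ξ))
        = A * (2 * Stmt5Aux.S 3 η) * ((Stmt5Aux.S d b - Stmt5Aux.S d a) * (2 * Stmt5Aux.S 3 ξ)) := by
      rw [e1]
    have hkey : A * B * (d:ℝ) * 4 * (Stmt5Aux.S (d+1) η * Stmt5Aux.S 3 ξ)
        < A * B * (d:ℝ) * 4 * (Stmt5Aux.S (d+1) ξ * Stmt5Aux.S 3 η) :=
      mul_lt_mul_of_pos_left hratio (by positivity)
    have final : B * (Stmt5Aux.S d a - Stmt5Aux.S d c) * (4 * (Stmt5Aux.S 3 ξ * Stmt5Aux.S 3 η))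
        < A * (Stmt5Aux.S d b - Stmt5Aux.S d a) * (4 * (Stmt5Aux.S 3 ξ * Stmt5Aux.S 3 η)) := by
      nlinarith [e1', e2', hkey]
    exact lt_of_mul_lt_mul_right final (by positivity)
  -- sign bookkeeping
  have hsign : ((-1:ℝ))^(d+1) * ((-1:ℝ))^d = -1 := by
    rw [← pow_add]
    exact Odd.neg_one_pow ⟨d, by ring⟩
  have hfac : (0:ℝ) < (Nat.factorial (d-1) : ℝ) := by positivity
  have egoal : (-1:ℝ)^(d+1) * ((-1:ℝ)^d * (Nat.factorial (d-1) : ℝ) *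
      ((A + B) * Stmt5Aux.S d a - A * Stmt5Aux.S d b - B * Stmt5Aux.S d c))
      = (Nat.factorial (d-1) : ℝ) *
        (A * (Stmt5Aux.S d b - Stmt5Aux.S d a) - B * (Stmt5Aux.S d a - Stmt5Aux.S d c)) := by
    rw [show (-1:ℝ)^(d+1) * ((-1:ℝ)^d * (Nat.factorial (d-1) : ℝ) *
        ((A + B) * Stmt5Aux.S d a - A * Stmt5Aux.S d b - B * Stmt5Aux.S d c))
      = ((-1:ℝ)^(d+1) * (-1:ℝ)^d) * ((Nat.factorial (d-1) : ℝ) *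
        ((A + B) * Stmt5Aux.S d a - A * Stmt5Aux.S d b - B * Stmt5Aux.S d c)) from by ring, hsign]
    ring
  rw [egoal]
  exact mul_pos hfac (by linarith)
end

section
/- For every z > 0 and every b > 0, define Φ(A) = Σ_{n≥0} 1/((n+A)^2 + b^2) for A > 0. Then Ψ_2(z) Φ''(z) - Ψ_3(z) Φ'(z) > 0, where Ψ_2, Ψ_3 are polygamma functions. Equivalently, z ↦ Ψ_2(z)/Φ'(z) is strictly decreasing on (0, ∞). -/
/-- The k-th polygamma function via its series representation
`Ψ_k(z) = Σ_{n≥0} (-1)^{k+1} k! / (n+z)^{k+1}` for `z > 0`. -/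
noncomputable def polyGamma (k : ℕ) (z : ℝ) : ℝ :=
  ∑' n : ℕ, (-1 : ℝ) ^ (k + 1) * (Nat.factorial k) / ((n : ℝ) + z) ^ (k + 1)

/-- `Φ(A) = Σ_{n≥0} 1/((n+A)^2 + b^2)`. -/
noncomputable def PhiFn (b A : ℝ) : ℝ := ∑' n : ℕ, 1 / (((n : ℝ) + A) ^ 2 + b ^ 2)

open Filter Set

namespace Stmt6Aux

lemma sum_shift {z : ℝ} (hz : 0 < z) {k : ℕ} (hk : 2 ≤ k) :
    Summable (fun n : ℕ => 1 / ((n : ℝ) + z) ^ k) := by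
  have h1 : (1 : ℝ) < (k : ℝ) := by exact_mod_cast lt_of_lt_of_le one_lt_two (by exact_mod_cast hk)
  have h := (Real.summable_one_div_nat_add_rpow z k).2 h1
  refine h.congr fun n => ?_
  rw [abs_of_pos (by positivity), Real.rpow_natCast]

lemma hasDerivAt_tsum_of_isOpen {f f' : ℕ → ℝ → ℝ} {s : Set ℝ} (hs : IsOpen s) {u : ℕ → ℝ}
    (hu : Summable u)
    (hf : ∀ n, ∀ x ∈ s, HasDerivAt (f n) (f' n x) x)
    (hf' : ∀ n, ∀ x ∈ s, ‖f' n x‖ ≤ u n)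
    (hsum : ∀ x ∈ s, Summable (fun n => f n x))
    {x : ℝ} (hx : x ∈ s) : HasDerivAt (fun y => ∑' n, f n y) (∑' n, f' n x) x := by
  refine hasDerivAt_of_tendstoUniformlyOn hs
    (tendstoUniformlyOn_tsum hu fun n y hy => hf' n y hy)
    (Eventually.of_forall fun t y hy => HasDerivAt.fun_sum fun n _ => hf n y hy)
    (fun y hy => (hsum y hy).hasSum) hx

variable {b z : ℝ}

lemma hD_quad (b : ℝ) (n : ℕ) (A : ℝ) :
    HasDerivAt (fun y : ℝ => ((n : ℝ) + y) ^ 2 + b ^ 2) (2 * ((n : ℝ) + A)) A := by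
  simpa using ((((hasDerivAt_id A).const_add (n : ℝ)).pow 2).add_const (b ^ 2))

lemma hD_g1 (hb : 0 < b) (n : ℕ) (A : ℝ) :
    HasDerivAt (fun y : ℝ => 1 / (((n : ℝ) + y) ^ 2 + b ^ 2))
      (-2 * ((n : ℝ) + A) / (((n : ℝ) + A) ^ 2 + b ^ 2) ^ 2) A := by
  have hne : ((n : ℝ) + A) ^ 2 + b ^ 2 ≠ 0 := by positivity
  have h := (hD_quad b n A).fun_inv hne
  simp only [one_div]
  exact h.congr_deriv (by ring)

lemma hD_g2 (hb : 0 < b) (n : ℕ) (A : ℝ) :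
    HasDerivAt (fun y : ℝ => -2 * ((n : ℝ) + y) / (((n : ℝ) + y) ^ 2 + b ^ 2) ^ 2)
      ((6 * ((n : ℝ) + A) ^ 2 - 2 * b ^ 2) / (((n : ℝ) + A) ^ 2 + b ^ 2) ^ 3) A := by
  have hne : ((n : ℝ) + A) ^ 2 + b ^ 2 ≠ 0 := by positivity
  have hnum : HasDerivAt (fun y : ℝ => -2 * ((n : ℝ) + y)) (-2) A := by
    simpa using ((hasDerivAt_id A).const_add (n : ℝ)).const_mul (-2)
  have hden := (hD_quad b n A).fun_pow 2
  have h := hnum.fun_div hden (pow_ne_zero 2 hne)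
  refine h.congr_deriv ?_
  field_simp
  ring

lemma hD_p2 (n : ℕ) {A : ℝ} (hA : 0 < (n : ℝ) + A) :
    HasDerivAt (fun y : ℝ => -2 / ((n : ℝ) + y) ^ 3) (6 / ((n : ℝ) + A) ^ 4) A := by
  have hne : ((n : ℝ) + A) ^ 3 ≠ 0 := by positivity
  have hden : HasDerivAt (fun y : ℝ => ((n : ℝ) + y) ^ 3) (3 * ((n : ℝ) + A) ^ 2) A := by
    simpa using (((hasDerivAt_id A).const_add (n : ℝ)).fun_pow 3)
  have h := (hasDerivAt_const A (-2 : ℝ)).fun_div hden hne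
  refine h.congr_deriv ?_
  field_simp
  ring

lemma g1_bound (hb : 0 < b) {c x : ℝ} (hc : 0 < c) (hcx : c ≤ x) (n : ℕ) :
    1 / (((n : ℝ) + x) ^ 2 + b ^ 2) ≤ 1 * (1 / ((n : ℝ) + c) ^ 2) := by
  rw [one_mul]
  have h1 : (0:ℝ) < (n : ℝ) + c := by positivity
  rw [div_le_div_iff₀ (by positivity) (by positivity)]
  nlinarith [sq_nonneg ((n:ℝ) + x), sq_nonneg b]

lemma g2_bound (hb : 0 < b) {c x : ℝ} (hc : 0 < c) (hcx : c ≤ x) (n : ℕ) :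
    ‖-2 * ((n : ℝ) + x) / (((n : ℝ) + x) ^ 2 + b ^ 2) ^ 2‖ ≤ 2 * (1 / ((n : ℝ) + c) ^ 3) := by
  have hcn : (0:ℝ) < (n : ℝ) + c := by positivity
  have hxn : (0:ℝ) < (n : ℝ) + x := lt_of_lt_of_le hcn (by linarith)
  have h3 : ((n:ℝ) + c) ^ 3 ≤ ((n:ℝ) + x) ^ 3 := pow_le_pow_left₀ hcn.le (by linarith) 3
  have he : ‖-2 * ((n : ℝ) + x) / (((n : ℝ) + x) ^ 2 + b ^ 2) ^ 2‖
      = 2 * ((n:ℝ) + x) / (((n : ℝ) + x) ^ 2 + b ^ 2) ^ 2 := by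
    rw [Real.norm_eq_abs, abs_div, abs_of_neg (by nlinarith : -2*((n:ℝ)+x) < 0),
      abs_of_pos (by positivity)]
    ring
  rw [he, mul_one_div, div_le_div_iff₀ (by positivity) (by positivity)]
  have h4 : ((n:ℝ)+x)*((n:ℝ)+c)^3 ≤ ((n:ℝ)+x)^4 := by nlinarith
  have h5 : ((n:ℝ)+x)^4 ≤ ((((n:ℝ)+x)^2+b^2))^2 := by nlinarith [sq_nonneg b, sq_nonneg ((n:ℝ)+x)]
  nlinarith [h4, h5]


lemma g3_bound (hb : 0 < b) {c x : ℝ} (hc : 0 < c) (hcx : c ≤ x) (n : ℕ) :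
    ‖(6 * ((n : ℝ) + x) ^ 2 - 2 * b ^ 2) / (((n : ℝ) + x) ^ 2 + b ^ 2) ^ 3‖
      ≤ 8 * (1 / ((n : ℝ) + c) ^ 4) := by
  have hcn : (0:ℝ) < (n : ℝ) + c := by positivity
  have hxn : (0:ℝ) < (n : ℝ) + x := lt_of_lt_of_le hcn (by linarith)
  have h4 : ((n:ℝ) + c) ^ 4 ≤ ((n:ℝ) + x) ^ 4 := pow_le_pow_left₀ hcn.le (by linarith) 4
  rw [Real.norm_eq_abs, abs_div, abs_of_pos (by positivity : (0:ℝ) < (((n:ℝ)+x)^2+b^2)^3),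
    mul_one_div, div_le_div_iff₀ (by positivity) (by positivity)]
  have habs : |6 * ((n:ℝ) + x) ^ 2 - 2 * b ^ 2| ≤ 6 * ((n:ℝ)+x)^2 + 2*b^2 := by
    rw [abs_le]; constructor <;> nlinarith [sq_nonneg ((n:ℝ)+x), sq_nonneg b]
  have hkey : (6 * ((n:ℝ)+x)^2 + 2*b^2) * ((n:ℝ)+x)^4 ≤ 8 * ((((n:ℝ)+x)^2+b^2))^3 := by
    nlinarith [sq_nonneg b, sq_nonneg ((n:ℝ)+x), pow_pos hxn 2, sq_nonneg (((n:ℝ)+x)^2 - b^2),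
      mul_pos (pow_pos hxn 2) (pow_pos hxn 2), sq_nonneg (((n:ℝ)+x)*b),
      mul_nonneg (mul_nonneg (sq_nonneg ((n:ℝ)+x)) (sq_nonneg b)) (sq_nonneg b),
      mul_nonneg (mul_nonneg (sq_nonneg ((n:ℝ)+x)) (sq_nonneg ((n:ℝ)+x))) (sq_nonneg b)]
  calc |6 * ((n:ℝ) + x) ^ 2 - 2 * b ^ 2| * ((n:ℝ)+c)^4
      ≤ (6 * ((n:ℝ)+x)^2 + 2*b^2) * ((n:ℝ)+x)^4 := by
        apply mul_le_mul habs h4 (by positivity) (by positivity)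
    _ ≤ 8 * ((((n:ℝ)+x)^2+b^2))^3 := hkey

lemma p3_bound {c x : ℝ} (hc : 0 < c) (hcx : c ≤ x) (n : ℕ) :
    ‖(6 : ℝ) / ((n : ℝ) + x) ^ 4‖ ≤ 6 * (1 / ((n : ℝ) + c) ^ 4) := by
  have hcn : (0:ℝ) < (n : ℝ) + c := by positivity
  have hxn : (0:ℝ) < (n : ℝ) + x := lt_of_lt_of_le hcn (by linarith)
  have h4 : ((n:ℝ) + c) ^ 4 ≤ ((n:ℝ) + x) ^ 4 := pow_le_pow_left₀ hcn.le (by linarith) 4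
  rw [Real.norm_eq_abs, abs_of_pos (by positivity), mul_one_div,
    div_le_div_iff₀ (by positivity) (by positivity)]
  nlinarith

-- summability of the four series at a point x ≥ c > 0
lemma sum_g1' (hb : 0 < b) {c x : ℝ} (hc : 0 < c) (hcx : c ≤ x) :
    Summable (fun n : ℕ => 1 / (((n : ℝ) + x) ^ 2 + b ^ 2)) := by
  refine Summable.of_nonneg_of_le (fun n => by positivity) (fun n => g1_bound hb hc hcx n) ?_
  exact (sum_shift hc le_rfl).mul_left 1

lemma sum_g2' (hb : 0 < b) {c x : ℝ} (hc : 0 < c) (hcx : c ≤ x) :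
    Summable (fun n : ℕ => ‖-2 * ((n : ℝ) + x) / (((n : ℝ) + x) ^ 2 + b ^ 2) ^ 2‖) :=
  Summable.of_nonneg_of_le (fun n => norm_nonneg _) (fun n => g2_bound hb hc hcx n)
    ((sum_shift hc (by norm_num)).mul_left 2)

lemma sum_g3' (hb : 0 < b) {c x : ℝ} (hc : 0 < c) (hcx : c ≤ x) :
    Summable (fun n : ℕ =>
      ‖(6 * ((n : ℝ) + x) ^ 2 - 2 * b ^ 2) / (((n : ℝ) + x) ^ 2 + b ^ 2) ^ 3‖) :=
  Summable.of_nonneg_of_le (fun n => norm_nonneg _) (fun n => g3_bound hb hc hcx n)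
    ((sum_shift hc (by norm_num)).mul_left 8)

lemma sum_p2' {x : ℝ} (hx : 0 < x) :
    Summable (fun n : ℕ => ‖(-2 : ℝ) / ((n : ℝ) + x) ^ 3‖) := by
  refine Summable.of_nonneg_of_le (fun n => norm_nonneg _) (fun n => ?_)
    ((sum_shift hx (by norm_num : 2 ≤ 3)).mul_left 2)
  have hxn : (0:ℝ) < (n : ℝ) + x := by positivity
  rw [Real.norm_eq_abs, abs_div, abs_of_pos (by positivity : (0:ℝ) < ((n:ℝ)+x)^3),
    mul_one_div, abs_of_neg (by norm_num : (-2:ℝ) < 0)]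
  norm_num

lemma sum_p3' {x : ℝ} (hx : 0 < x) :
    Summable (fun n : ℕ => ‖(6 : ℝ) / ((n : ℝ) + x) ^ 4‖) :=
  Summable.of_nonneg_of_le (fun n => norm_nonneg _) (fun n => p3_bound hx le_rfl n)
    ((sum_shift hx (by norm_num)).mul_left 6)


lemma polyGamma_two (z : ℝ) : polyGamma 2 z = ∑' n : ℕ, -2 / ((n : ℝ) + z) ^ 3 := by
  unfold polyGamma
  exact tsum_congr fun n => by norm_num [Nat.factorial]

lemma polyGamma_three (z : ℝ) : polyGamma 3 z = ∑' n : ℕ, 6 / ((n : ℝ) + z) ^ 4 := by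
  unfold polyGamma
  exact tsum_congr fun n => by norm_num [Nat.factorial]

lemma hD_Phi (hb : 0 < b) (hz : 0 < z) :
    HasDerivAt (PhiFn b) (∑' n : ℕ, -2 * ((n : ℝ) + z) / (((n : ℝ) + z) ^ 2 + b ^ 2) ^ 2) z := by
  have h2 : (0:ℝ) < z / 2 := by linarith
  exact hasDerivAt_tsum_of_isOpen (isOpen_Ioi (a := z / 2))
    ((sum_shift h2 (by norm_num : 2 ≤ 3)).mul_left 2)
    (fun n x _ => hD_g1 hb n x)
    (fun n x hx => g2_bound hb h2 (le_of_lt hx) n)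
    (fun x hx => sum_g1' hb h2 (le_of_lt hx))
    (by simp [Set.mem_Ioi]; linarith)

lemma hD_Phi' (hb : 0 < b) (hz : 0 < z) :
    HasDerivAt (fun y : ℝ => ∑' n : ℕ, -2 * ((n : ℝ) + y) / (((n : ℝ) + y) ^ 2 + b ^ 2) ^ 2)
      (∑' n : ℕ, (6 * ((n : ℝ) + z) ^ 2 - 2 * b ^ 2) / (((n : ℝ) + z) ^ 2 + b ^ 2) ^ 3) z := by
  have h2 : (0:ℝ) < z / 2 := by linarith
  exact hasDerivAt_tsum_of_isOpen (isOpen_Ioi (a := z / 2))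
    ((sum_shift h2 (by norm_num : 2 ≤ 4)).mul_left 8)
    (fun n x _ => hD_g2 hb n x)
    (fun n x hx => g3_bound hb h2 (le_of_lt hx) n)
    (fun x hx => (sum_g2' hb h2 (le_of_lt hx)).of_norm)
    (by simp [Set.mem_Ioi]; linarith)

lemma hD_Psi2 (hz : 0 < z) :
    HasDerivAt (fun y : ℝ => ∑' n : ℕ, -2 / ((n : ℝ) + y) ^ 3)
      (∑' n : ℕ, 6 / ((n : ℝ) + z) ^ 4) z := by
  have h2 : (0:ℝ) < z / 2 := by linarith
  refine hasDerivAt_tsum_of_isOpen (isOpen_Ioi (a := z / 2))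
    ((sum_shift h2 (by norm_num : 2 ≤ 4)).mul_left 6)
    (fun n x hx => hD_p2 n ?_)
    (fun n x hx => p3_bound h2 (le_of_lt hx) n)
    (fun x hx => (sum_p2' (lt_trans h2 hx)).of_norm)
    (by simp [Set.mem_Ioi]; linarith)
  have hx0 : (0:ℝ) < x := lt_trans h2 hx
  positivity

lemma deriv_Phi (hb : 0 < b) (hz : 0 < z) :
    deriv (PhiFn b) z = ∑' n : ℕ, -2 * ((n : ℝ) + z) / (((n : ℝ) + z) ^ 2 + b ^ 2) ^ 2 :=
  (hD_Phi hb hz).deriv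

lemma derivPhi_eventually (hb : 0 < b) (hz : 0 < z) :
    deriv (PhiFn b) =ᶠ[nhds z]
      (fun y : ℝ => ∑' n : ℕ, -2 * ((n : ℝ) + y) / (((n : ℝ) + y) ^ 2 + b ^ 2) ^ 2) := by
  filter_upwards [isOpen_Ioi.mem_nhds (show z ∈ Set.Ioi (0:ℝ) from hz)] with y hy
  exact deriv_Phi hb hy

lemma hD_derivPhi (hb : 0 < b) (hz : 0 < z) :
    HasDerivAt (deriv (PhiFn b))
      (∑' n : ℕ, (6 * ((n : ℝ) + z) ^ 2 - 2 * b ^ 2) / (((n : ℝ) + z) ^ 2 + b ^ 2) ^ 3) z :=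
  (hD_Phi' hb hz).congr_of_eventuallyEq (derivPhi_eventually hb hz)

lemma iteratedDeriv_two_Phi (hb : 0 < b) (hz : 0 < z) :
    iteratedDeriv 2 (PhiFn b) z
      = ∑' n : ℕ, (6 * ((n : ℝ) + z) ^ 2 - 2 * b ^ 2) / (((n : ℝ) + z) ^ 2 + b ^ 2) ^ 3 := by
  rw [iteratedDeriv_succ, iteratedDeriv_one]
  exact (hD_derivPhi hb hz).deriv

lemma hD_polyGamma2 (hz : 0 < z) :
    HasDerivAt (polyGamma 2) (polyGamma 3 z) z := by
  rw [polyGamma_three]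
  have heq : polyGamma 2 = fun y : ℝ => ∑' n : ℕ, -2 / ((n : ℝ) + y) ^ 3 :=
    funext fun y => polyGamma_two y
  rw [heq]
  exact hD_Psi2 hz

lemma keyPoint {b u x : ℝ} (hb : 0 < b) (hu : 0 < u) (hx : 0 < x) :
    0 < (-2 / u ^ 3 * ((6 * x ^ 2 - 2 * b ^ 2) / (x ^ 2 + b ^ 2) ^ 3)
          - 6 / u ^ 4 * (-2 * x / (x ^ 2 + b ^ 2) ^ 2))
        + (-2 / x ^ 3 * ((6 * u ^ 2 - 2 * b ^ 2) / (u ^ 2 + b ^ 2) ^ 3)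
          - 6 / x ^ 4 * (-2 * u / (u ^ 2 + b ^ 2) ^ 2)) := by
  have hE : (0:ℝ) < b ^ 2 * ((b ^ 2) ^ 3 * (12 * x ^ 5 + 4 * u * x ^ 4 + 4 * u ^ 4 * x + 12 * u ^ 5)
      + (b ^ 2) ^ 2 * (12 * (x - u) ^ 2 * (x ^ 5 + x ^ 4 * u + x ^ 3 * u ^ 2 + x ^ 2 * u ^ 3
          + x * u ^ 4 + u ^ 5)
        + 36 * u ^ 2 * x ^ 5 + 12 * u ^ 3 * x ^ 4 + 12 * u ^ 4 * x ^ 3 + 36 * u ^ 5 * x ^ 2)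
      + b ^ 2 * (36 * u ^ 2 * x ^ 2 * (x - u) ^ 2 * (x + u) * (x ^ 2 + u ^ 2)
        + 48 * u ^ 4 * x ^ 4 * (u + x))
      + 8 * u ^ 4 * x ^ 4 * (u + x) * (4 * (x - u) ^ 2 + u ^ 2 + x ^ 2)) := by positivity
  have hD : (0:ℝ) < u ^ 4 * x ^ 4 * (u ^ 2 + b ^ 2) ^ 3 * (x ^ 2 + b ^ 2) ^ 3 := by positivity
  have hEq : (-2 / u ^ 3 * ((6 * x ^ 2 - 2 * b ^ 2) / (x ^ 2 + b ^ 2) ^ 3)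
          - 6 / u ^ 4 * (-2 * x / (x ^ 2 + b ^ 2) ^ 2))
        + (-2 / x ^ 3 * ((6 * u ^ 2 - 2 * b ^ 2) / (u ^ 2 + b ^ 2) ^ 3)
          - 6 / x ^ 4 * (-2 * u / (u ^ 2 + b ^ 2) ^ 2))
      = (b ^ 2 * ((b ^ 2) ^ 3 * (12 * x ^ 5 + 4 * u * x ^ 4 + 4 * u ^ 4 * x + 12 * u ^ 5)
      + (b ^ 2) ^ 2 * (12 * (x - u) ^ 2 * (x ^ 5 + x ^ 4 * u + x ^ 3 * u ^ 2 + x ^ 2 * u ^ 3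
          + x * u ^ 4 + u ^ 5)
        + 36 * u ^ 2 * x ^ 5 + 12 * u ^ 3 * x ^ 4 + 12 * u ^ 4 * x ^ 3 + 36 * u ^ 5 * x ^ 2)
      + b ^ 2 * (36 * u ^ 2 * x ^ 2 * (x - u) ^ 2 * (x + u) * (x ^ 2 + u ^ 2)
        + 48 * u ^ 4 * x ^ 4 * (u + x))
      + 8 * u ^ 4 * x ^ 4 * (u + x) * (4 * (x - u) ^ 2 + u ^ 2 + x ^ 2)))
        / (u ^ 4 * x ^ 4 * (u ^ 2 + b ^ 2) ^ 3 * (x ^ 2 + b ^ 2) ^ 3) := by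
    rw [eq_div_iff (ne_of_gt hD)]
    field_simp
    ring
  rw [hEq]
  exact div_pos hE hD

lemma key (hb : 0 < b) (hz : 0 < z) :
    0 < (∑' n : ℕ, -2 / ((n : ℝ) + z) ^ 3)
          * (∑' n : ℕ, (6 * ((n : ℝ) + z) ^ 2 - 2 * b ^ 2) / (((n : ℝ) + z) ^ 2 + b ^ 2) ^ 3)
        - (∑' n : ℕ, 6 / ((n : ℝ) + z) ^ 4)
          * (∑' n : ℕ, -2 * ((n : ℝ) + z) / (((n : ℝ) + z) ^ 2 + b ^ 2) ^ 2) := by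
  have ha := sum_p2' hz
  have hc := sum_g3' hb hz le_rfl
  have he := sum_p3' hz
  have hd := sum_g2' hb hz le_rfl
  have hac := summable_mul_of_summable_norm ha hc
  have hed := summable_mul_of_summable_norm he hd
  rw [tsum_mul_tsum_of_summable_norm ha hc, tsum_mul_tsum_of_summable_norm he hd,
    ← Summable.tsum_sub hac hed]
  set T : ℕ × ℕ → ℝ := fun p =>
    (-2 : ℝ) / ((p.1 : ℝ) + z) ^ 3
        * ((6 * ((p.2 : ℝ) + z) ^ 2 - 2 * b ^ 2) / (((p.2 : ℝ) + z) ^ 2 + b ^ 2) ^ 3)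
      - (6 : ℝ) / ((p.1 : ℝ) + z) ^ 4
        * (-2 * ((p.2 : ℝ) + z) / (((p.2 : ℝ) + z) ^ 2 + b ^ 2) ^ 2) with hT
  have ht : Summable T := hac.sub hed
  have hts : Summable (fun p : ℕ × ℕ => T p.swap) := ht.comp_injective Prod.swap_injective
  have hpt : ∀ p : ℕ × ℕ, 0 < T p + T p.swap := by
    intro p
    have h1 : (0:ℝ) < (p.1 : ℝ) + z := by positivity
    have h2 : (0:ℝ) < (p.2 : ℝ) + z := by positivity
    exact keyPoint hb h1 h2
  have hswap : ∑' p : ℕ × ℕ, T p.swap = ∑' p : ℕ × ℕ, T p := (Equiv.prodComm ℕ ℕ).tsum_eq T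
  have hpos : 0 < ∑' p : ℕ × ℕ, (T p + T p.swap) :=
    Summable.tsum_pos (ht.add hts) (fun p => (hpt p).le) (0, 0) (hpt (0, 0))
  rw [Summable.tsum_add ht hts, hswap] at hpos
  linarith

lemma tsum_g2_neg (hb : 0 < b) (hz : 0 < z) :
    (∑' n : ℕ, -2 * ((n : ℝ) + z) / (((n : ℝ) + z) ^ 2 + b ^ 2) ^ 2) < 0 := by
  have hsum : Summable (fun n : ℕ => 2 * ((n : ℝ) + z) / (((n : ℝ) + z) ^ 2 + b ^ 2) ^ 2) := by
    refine ((sum_g2' hb hz le_rfl).of_norm.neg).congr fun n => by ring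
  have hpos : 0 < ∑' n : ℕ, 2 * ((n : ℝ) + z) / (((n : ℝ) + z) ^ 2 + b ^ 2) ^ 2 := by
    refine Summable.tsum_pos hsum (fun n => by positivity) 0 (by positivity)
  have heq : (fun n : ℕ => -2 * ((n : ℝ) + z) / (((n : ℝ) + z) ^ 2 + b ^ 2) ^ 2)
      = fun n : ℕ => -(2 * ((n : ℝ) + z) / (((n : ℝ) + z) ^ 2 + b ^ 2) ^ 2) :=
    funext fun n => by ring
  rw [heq, tsum_neg]
  linarith

end Stmt6Aux

open Stmt6Aux in
/-- For `z > 0` and `b > 0`, `Ψ_2(z)Φ''(z) - Ψ_3(z)Φ'(z) > 0`; equivalently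
`z ↦ Ψ_2(z)/Φ'(z)` is strictly decreasing on `(0,∞)`. -/
theorem stmt6 (b : ℝ) (hb : 0 < b) :
    (∀ z : ℝ, 0 < z →
      0 < polyGamma 2 z * iteratedDeriv 2 (PhiFn b) z - polyGamma 3 z * deriv (PhiFn b) z) ∧
    StrictAntiOn (fun z : ℝ => polyGamma 2 z / deriv (PhiFn b) z) (Set.Ioi 0) := by
  have part1 : ∀ z : ℝ, 0 < z →
      0 < polyGamma 2 z * iteratedDeriv 2 (PhiFn b) z - polyGamma 3 z * deriv (PhiFn b) z := by
    intro z hz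
    rw [polyGamma_two, polyGamma_three, iteratedDeriv_two_Phi hb hz, deriv_Phi hb hz]
    exact key hb hz
  refine ⟨part1, ?_⟩
  have hder : ∀ z ∈ Set.Ioi (0:ℝ),
      HasDerivAt (fun y : ℝ => polyGamma 2 y / deriv (PhiFn b) y)
        ((polyGamma 3 z * deriv (PhiFn b) z - polyGamma 2 z * iteratedDeriv 2 (PhiFn b) z)
          / (deriv (PhiFn b) z) ^ 2) z := by
    intro z hz
    have hz' : (0:ℝ) < z := hz
    have h1 : HasDerivAt (polyGamma 2) (polyGamma 3 z) z := hD_polyGamma2 hz'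
    have h2 : HasDerivAt (deriv (PhiFn b)) (iteratedDeriv 2 (PhiFn b) z) z := by
      rw [iteratedDeriv_two_Phi hb hz']
      exact hD_derivPhi hb hz'
    have hne : deriv (PhiFn b) z ≠ 0 := by
      rw [deriv_Phi hb hz']
      exact ne_of_lt (tsum_g2_neg hb hz')
    exact h1.div h2 hne
  refine strictAntiOn_of_deriv_neg (convex_Ioi 0) ?_ ?_
  · exact fun z hz => ((hder z hz).continuousAt).continuousWithinAt
  · intro z hz
    rw [interior_Ioi] at hz
    rw [(hder z hz).deriv]
    apply div_neg_of_neg_of_pos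
    · linarith [part1 z hz]
    · have hne : deriv (PhiFn b) z ≠ 0 := by
        rw [deriv_Phi hb hz]
        exact ne_of_lt (tsum_g2_neg hb hz)
      exact pow_two_pos_of_ne_zero hne
end

section
/- Fix θ > 0. The function f(τ) = -Ψ_1(θ+τ)/θ^4 - Ψ_2(θ+τ)/θ^3 - Ψ_3(θ+τ)/(6θ^2) is strictly increasing on [1, ∞) provided θ < 1. In particular, for any ω < -1 one has f(-ω) - f(1) > 0. -/
/-- `f(τ) = -Ψ_1(θ+τ)/θ^4 - Ψ_2(θ+τ)/θ^3 - Ψ_3(θ+τ)/(6θ^2)`. -/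
noncomputable def f8 (θ τ : ℝ) : ℝ :=
  -polyGamma 1 (θ + τ) / θ ^ 4 - polyGamma 2 (θ + τ) / θ ^ 3
    - polyGamma 3 (θ + τ) / (6 * θ ^ 2)

lemma summable_aux (z : ℝ) (hz : 1 ≤ z) (p : ℕ) (hp : 2 ≤ p) :
    Summable (fun n : ℕ => 1 / ((n : ℝ) + z) ^ p) := by
  have base : Summable (fun n : ℕ => 1 / ((n : ℝ) + 1) ^ 2) := by
    have h := (Real.summable_one_div_nat_pow (p := 2)).mpr one_lt_two
    have h2 := (summable_nat_add_iff 1).mpr h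
    refine h2.congr fun n => ?_
    push_cast
    ring
  refine base.of_nonneg_of_le (fun n => by positivity) (fun n => ?_)
  have hn : (0:ℝ) ≤ (n:ℝ) := Nat.cast_nonneg n
  have h1 : (1:ℝ) ≤ (n:ℝ) + z := by linarith
  calc 1 / ((n : ℝ) + z) ^ p ≤ 1 / ((n : ℝ) + z) ^ 2 := by
        apply one_div_le_one_div_of_le (by positivity)
        exact pow_le_pow_right₀ h1 hp
    _ ≤ 1 / ((n : ℝ) + 1) ^ 2 := by
        apply one_div_le_one_div_of_le (by positivity)
        apply pow_le_pow_left₀ (by positivity)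
        linarith

lemma summable_g (θ τ : ℝ) (hθ : 0 < θ) (hτ : 1 ≤ τ) :
    Summable (fun n : ℕ => -(((n:ℝ) + τ) ^ 2 / (θ ^ 4 * ((n:ℝ) + τ + θ) ^ 4))) := by
  have hpos : Summable (fun n : ℕ => ((n:ℝ) + τ) ^ 2 / (θ ^ 4 * ((n:ℝ) + τ + θ) ^ 4)) := by
    refine Summable.of_nonneg_of_le (fun n => by positivity) (fun n => ?_)
      ((summable_aux (τ + θ) (by linarith) 2 le_rfl).mul_left (1 / θ ^ 4))
    have hn : (0:ℝ) ≤ (n:ℝ) := Nat.cast_nonneg n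
    have hY : (0:ℝ) < (n:ℝ) + τ + θ := by linarith
    calc ((n:ℝ) + τ) ^ 2 / (θ ^ 4 * ((n:ℝ) + τ + θ) ^ 4)
        ≤ ((n:ℝ) + τ + θ) ^ 2 / (θ ^ 4 * ((n:ℝ) + τ + θ) ^ 4) := by
          apply div_le_div_of_nonneg_right ?_ (by positivity)
          nlinarith
      _ = 1 / θ ^ 4 * (1 / ((n:ℝ) + (τ + θ)) ^ 2) := by
          field_simp
          ring
  exact hpos.neg

lemma f8_eq (θ τ : ℝ) (hθ : 0 < θ) (hτ : 1 ≤ τ) :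
    f8 θ τ = ∑' n : ℕ, -(((n:ℝ) + τ) ^ 2 / (θ ^ 4 * ((n:ℝ) + τ + θ) ^ 4)) := by
  have hz : 1 ≤ θ + τ := by linarith
  have s2 := summable_aux (θ + τ) hz 2 le_rfl
  have s3 := summable_aux (θ + τ) hz 3 (by norm_num)
  have s4 := summable_aux (θ + τ) hz 4 (by norm_num)
  have e1 : polyGamma 1 (θ + τ) = ∑' n : ℕ, 1 / ((n:ℝ) + (θ + τ)) ^ 2 :=
    tsum_congr fun n => by norm_num [Nat.factorial]
  have e2 : polyGamma 2 (θ + τ) = ∑' n : ℕ, (-2) / ((n:ℝ) + (θ + τ)) ^ 3 :=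
    tsum_congr fun n => by norm_num [Nat.factorial]
  have e3 : polyGamma 3 (θ + τ) = ∑' n : ℕ, 6 / ((n:ℝ) + (θ + τ)) ^ 4 :=
    tsum_congr fun n => by norm_num [Nat.factorial]
  have s2' : Summable (fun n : ℕ => -(1 / ((n:ℝ) + (θ + τ)) ^ 2) / θ ^ 4) := (s2.neg.div_const _)
  have s3' : Summable (fun n : ℕ => ((-2) / ((n:ℝ) + (θ + τ)) ^ 3) / θ ^ 3) := by
    have h := (s3.mul_left (-2)).div_const (θ ^ 3)
    exact h.congr fun n => by ring
  have s4' : Summable (fun n : ℕ => (6 / ((n:ℝ) + (θ + τ)) ^ 4) / (6 * θ ^ 2)) := by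
    have h := (s4.mul_left 6).div_const (6 * θ ^ 2)
    exact h.congr fun n => by ring
  have : f8 θ τ = ∑' n : ℕ,
      (-(1 / ((n:ℝ) + (θ + τ)) ^ 2) / θ ^ 4 - ((-2) / ((n:ℝ) + (θ + τ)) ^ 3) / θ ^ 3
        - (6 / ((n:ℝ) + (θ + τ)) ^ 4) / (6 * θ ^ 2)) := by
    rw [Summable.tsum_sub (s2'.sub s3') s4', Summable.tsum_sub s2' s3']
    unfold f8
    rw [e1, e2, e3, tsum_div_const, tsum_div_const, tsum_div_const, tsum_neg, neg_div]
  rw [this]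
  refine tsum_congr fun n => ?_
  have hn : (0:ℝ) ≤ (n:ℝ) := Nat.cast_nonneg n
  have hY : ((n:ℝ) + (θ + τ)) ≠ 0 := by positivity
  have hθ' : θ ≠ 0 := ne_of_gt hθ
  have hY2 : ((n:ℝ) + τ + θ) = ((n:ℝ) + (θ + τ)) := by ring
  rw [hY2]
  field_simp
  ring

lemma term_le (θ : ℝ) (hθ : 0 < θ) (hθ1 : θ < 1) {X1 X2 : ℝ} (h1 : 1 ≤ X1) (h12 : X1 ≤ X2) :
    -(X1 ^ 2 / (θ ^ 4 * (X1 + θ) ^ 4)) ≤ -(X2 ^ 2 / (θ ^ 4 * (X2 + θ) ^ 4)) := by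
  have hX1 : (0:ℝ) < X1 := by linarith
  have hX2 : (0:ℝ) < X2 := by linarith
  have hA : (0:ℝ) < X1 + θ := by linarith
  have hB : (0:ℝ) < X2 + θ := by linarith
  have hprod : (1:ℝ) ≤ X1 * X2 := by
    nlinarith [mul_le_mul h1 (h1.trans h12) (by linarith : (0:ℝ) ≤ 1) (by linarith : (0:ℝ) ≤ X1)]
  have k : X2 * (X1 + θ) ^ 2 ≤ X1 * (X2 + θ) ^ 2 := by
    nlinarith [mul_nonneg (sub_nonneg.mpr h12) (show (0:ℝ) ≤ X1 * X2 - θ ^ 2 by nlinarith)]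
  have sq := mul_self_le_mul_self (mul_nonneg hX2.le (pow_nonneg hA.le 2)) k
  apply neg_le_neg
  rw [div_le_div_iff₀ (mul_pos (pow_pos hθ 4) (pow_pos hB 4)) (mul_pos (pow_pos hθ 4) (pow_pos hA 4))]
  nlinarith [mul_le_mul_of_nonneg_left sq (pow_nonneg hθ.le 4)]

lemma term_lt (θ : ℝ) (hθ : 0 < θ) (hθ1 : θ < 1) {X1 X2 : ℝ} (h1 : 1 ≤ X1) (h12 : X1 < X2) :
    -(X1 ^ 2 / (θ ^ 4 * (X1 + θ) ^ 4)) < -(X2 ^ 2 / (θ ^ 4 * (X2 + θ) ^ 4)) := by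
  have hX1 : (0:ℝ) < X1 := by linarith
  have hX2 : (0:ℝ) < X2 := by linarith
  have hA : (0:ℝ) < X1 + θ := by linarith
  have hB : (0:ℝ) < X2 + θ := by linarith
  have hprod : (1:ℝ) ≤ X1 * X2 := by
    nlinarith [mul_le_mul h1 (h1.trans h12.le) (by linarith : (0:ℝ) ≤ 1) (by linarith : (0:ℝ) ≤ X1)]
  have k : X2 * (X1 + θ) ^ 2 < X1 * (X2 + θ) ^ 2 := by
    nlinarith [mul_pos (sub_pos.mpr h12) (show (0:ℝ) < X1 * X2 - θ ^ 2 by nlinarith)]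
  have sq := mul_self_lt_mul_self (mul_nonneg hX2.le (pow_nonneg hA.le 2)) k
  apply neg_lt_neg
  rw [div_lt_div_iff₀ (mul_pos (pow_pos hθ 4) (pow_pos hB 4)) (mul_pos (pow_pos hθ 4) (pow_pos hA 4))]
  nlinarith [mul_lt_mul_of_pos_left sq (pow_pos hθ 4)]

/-- For `0 < θ < 1`, `f` is strictly increasing on `[1,∞)`; in particular
`f(-ω) - f(1) > 0` for any `ω < -1`. -/
theorem stmt8 (θ : ℝ) (hθ : 0 < θ) (hθ1 : θ < 1) :
    StrictMonoOn (f8 θ) (Set.Ici 1) ∧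
    ∀ ω : ℝ, ω < -1 → 0 < f8 θ (-ω) - f8 θ 1 := by
  have mono : StrictMonoOn (f8 θ) (Set.Ici 1) := by
    intro a ha b hb hab
    rw [Set.mem_Ici] at ha hb
    rw [f8_eq θ a hθ ha, f8_eq θ b hθ hb]
    refine Summable.tsum_lt_tsum (f := fun n : ℕ => -(((n:ℝ) + a) ^ 2 / (θ ^ 4 * ((n:ℝ) + a + θ) ^ 4)))
      (i := 0) (fun n => ?_) ?_ (summable_g θ a hθ ha) (summable_g θ b hθ hb)
    · have hn : (0:ℝ) ≤ (n:ℝ) := Nat.cast_nonneg n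
      exact term_le θ hθ hθ1 (by linarith) (by linarith)
    · simpa using term_lt θ hθ hθ1 (X1 := a) (X2 := b) ha hab
  refine ⟨mono, fun ω hω => ?_⟩
  have h1 : (1:ℝ) < -ω := by linarith
  have := mono (Set.mem_Ici.mpr le_rfl) (Set.mem_Ici.mpr h1.le) h1
  linarith
end

section
/- Let q ∈ (0,1) and let x, y be real parameters. For compositions A, B ∈ Z_{≥0}^n with A_i ≤ B_i for all i, define Φ(A, B; x, y) := (y/x)^{|A|} (x;q)_{|A|} (y/x;q)_{|B-A|} / (y;q)_{|B|} · q^{Σ_{i<j}(B_i - A_i)A_j} · ∏_{i=1}^n binom(B_i, A_i)_q, where |A| = Σ_i A_i. Then Σ_{A ≤ B} Φ(A, B; x, y) = 1 whenever all the q-Pochhammer denominators are nonzero. -/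
/-- The q-Pochhammer symbol `(x;q)_n = ∏_{i=0}^{n-1} (1 - x q^i)`. -/
noncomputable def qPoch (x q : ℝ) (n : ℕ) : ℝ := ∏ i ∈ Finset.range n, (1 - x * q ^ i)

/-- The q-binomial coefficient `binom(n,m)_q`, vanishing for `m > n`. -/
noncomputable def qBinom (q : ℝ) (n m : ℕ) : ℝ :=
  if m ≤ n then qPoch q q n / (qPoch q q m * qPoch q q (n - m)) else 0

lemma qPoch_zero (x q : ℝ) : qPoch x q 0 = 1 := by simp [qPoch]

lemma qPoch_succ (x q : ℝ) (n : ℕ) : qPoch x q (n+1) = qPoch x q n * (1 - x * q ^ n) :=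
  Finset.prod_range_succ _ _

lemma qPoch_qq_pos {q : ℝ} (hq : q ∈ Set.Ioo (0:ℝ) 1) (n : ℕ) : 0 < qPoch q q n := by
  apply Finset.prod_pos; intro i _
  have h1 : q ^ i ≤ 1 := pow_le_one₀ hq.1.le hq.2.le
  nlinarith [hq.1, hq.2]

lemma qPoch_qq_ne {q : ℝ} (hq : q ∈ Set.Ioo (0:ℝ) 1) (n : ℕ) : qPoch q q n ≠ 0 :=
  (qPoch_qq_pos hq n).ne'

lemma qBinom_zero_right {q : ℝ} (hq : q ∈ Set.Ioo (0:ℝ) 1) (n : ℕ) : qBinom q n 0 = 1 := by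
  simp [qBinom, qPoch_zero, div_self (qPoch_qq_ne hq n)]

lemma qBinom_self {q : ℝ} (hq : q ∈ Set.Ioo (0:ℝ) 1) (n : ℕ) : qBinom q n n = 1 := by
  simp [qBinom, qPoch_zero, div_self (qPoch_qq_ne hq n)]

lemma qBinom_of_lt {q : ℝ} {n m : ℕ} (h : n < m) : qBinom q n m = 0 := by
  simp [qBinom, Nat.not_le.2 h]

lemma qBinom_pascalA {q : ℝ} (hq : q ∈ Set.Ioo (0:ℝ) 1) (n a : ℕ) :
    qBinom q (n+1) (a+1) = q^(a+1) * qBinom q n (a+1) + qBinom q n a := by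
  rcases lt_trichotomy n a with h | rfl | h
  · rw [qBinom_of_lt (by omega), qBinom_of_lt (by omega), qBinom_of_lt (by omega)]; ring
  · rw [qBinom_self hq, qBinom_self hq, qBinom_of_lt (by omega)]; ring
  · obtain ⟨k, rfl⟩ : ∃ k, n = a + 1 + k := ⟨n - a - 1, by omega⟩
    have e1 : a + 1 + k + 1 - (a + 1) = k + 1 := by omega
    have e2 : a + 1 + k - (a + 1) = k := by omega
    have e3 : a + 1 + k - a = k + 1 := by omega
    unfold qBinom
    rw [if_pos (by omega), if_pos (by omega), if_pos (by omega), e1, e2, e3]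
    rw [show a+1+k+1 = (a+1+k)+1 from rfl, qPoch_succ q q (a+1+k), qPoch_succ q q a,
      qPoch_succ q q k]
    have ha := qPoch_qq_ne hq a
    have hk := qPoch_qq_ne hq k
    have hn := qPoch_qq_ne hq (a+1+k)
    have h1 : (1 : ℝ) - q * q ^ a ≠ 0 := by
      have : qPoch q q (a+1) ≠ 0 := qPoch_qq_ne hq (a+1)
      rw [qPoch_succ] at this; exact right_ne_zero_of_mul this
    have h2 : (1 : ℝ) - q * q ^ k ≠ 0 := by
      have : qPoch q q (k+1) ≠ 0 := qPoch_qq_ne hq (k+1)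
      rw [qPoch_succ] at this; exact right_ne_zero_of_mul this
    field_simp
    ring

lemma qBinom_pascalB {q : ℝ} (hq : q ∈ Set.Ioo (0:ℝ) 1) (n a : ℕ) :
    qBinom q (n+1) (a+1) = qBinom q n (a+1) + q^(n-a) * qBinom q n a := by
  rcases lt_trichotomy n a with h | rfl | h
  · rw [qBinom_of_lt (by omega), qBinom_of_lt (by omega), qBinom_of_lt (by omega)]; ring
  · rw [qBinom_self hq, qBinom_self hq, qBinom_of_lt (by omega)]; simp
  · obtain ⟨k, rfl⟩ : ∃ k, n = a + 1 + k := ⟨n - a - 1, by omega⟩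
    have e1 : a + 1 + k + 1 - (a + 1) = k + 1 := by omega
    have e2 : a + 1 + k - (a + 1) = k := by omega
    have e3 : a + 1 + k - a = k + 1 := by omega
    unfold qBinom
    rw [if_pos (by omega), if_pos (by omega), if_pos (by omega), e1, e2, e3]
    rw [show a+1+k+1 = (a+1+k)+1 from rfl, qPoch_succ q q (a+1+k), qPoch_succ q q a,
      qPoch_succ q q k]
    have ha := qPoch_qq_ne hq a
    have hk := qPoch_qq_ne hq k
    have hn := qPoch_qq_ne hq (a+1+k)
    have h1 : (1 : ℝ) - q * q ^ a ≠ 0 := by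
      have : qPoch q q (a+1) ≠ 0 := qPoch_qq_ne hq (a+1)
      rw [qPoch_succ] at this; exact right_ne_zero_of_mul this
    have h2 : (1 : ℝ) - q * q ^ k ≠ 0 := by
      have : qPoch q q (k+1) ≠ 0 := qPoch_qq_ne hq (k+1)
      rw [qPoch_succ] at this; exact right_ne_zero_of_mul this
    field_simp
    ring

/-- Gaussian-binomial q-Vandermonde. -/
lemma lemV {q : ℝ} (hq : q ∈ Set.Ioo (0:ℝ) 1) (b c m : ℕ) :
    ∑ a ∈ Finset.range (m+1), q^((b-a)*(m-a)) * qBinom q b a * qBinom q c (m-a)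
      = qBinom q (b+c) m := by
  induction b generalizing m with
  | zero =>
    rw [Finset.sum_eq_single 0]
    · simp [qBinom_zero_right hq]
    · intro a _ ha
      rw [qBinom_of_lt (by omega)]; ring
    · simp
  | succ b ih =>
    cases m with
    | zero =>
      rw [Finset.sum_range_one, qBinom_zero_right hq, qBinom_zero_right hq, qBinom_zero_right hq]
      norm_num
    | succ m =>
      rw [Finset.sum_range_succ']
      have hsplit : ∀ a ∈ Finset.range (m+1),
          q^((b+1-(a+1))*(m+1-(a+1))) * qBinom q (b+1) (a+1) * qBinom q c (m+1-(a+1))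
          = (q^(m+1) * (q^((b-(a+1))*(m+1-(a+1))) * qBinom q b (a+1) * qBinom q c (m+1-(a+1))))
            + q^((b-a)*(m-a)) * qBinom q b a * qBinom q c (m-a) := by
        intro a ha
        have ham : a ≤ m := by simpa using Nat.lt_succ_iff.mp (Finset.mem_range.mp ha)
        rw [qBinom_pascalA hq]
        have e0 : b+1-(a+1) = b - a := by omega
        have e1 : m+1-(a+1) = m - a := by omega
        rw [e0, e1]
        rw [mul_add, add_mul]
        congr 1
        rcases le_or_gt (a+1) b with hab | hab
        · obtain ⟨d, rfl⟩ : ∃ d, b = a + 1 + d := ⟨b - a - 1, by omega⟩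
          obtain ⟨e, rfl⟩ : ∃ e, m = a + e := ⟨m - a, by omega⟩
          have f1 : a + 1 + d - a = d + 1 := by omega
          have f2 : a + e - a = e := by omega
          have f3 : a + 1 + d - (a + 1) = d := by omega
          rw [f1, f2, f3]
          have hpow : q ^ ((d+1)*e) * q ^ (a+1) = q ^ (a+e+1) * q ^ (d*e) := by
            rw [← pow_add, ← pow_add]; congr 1; ring
          linear_combination (qBinom q (a+1+d) (a+1) * qBinom q c e) * hpow
        · rw [qBinom_of_lt (by omega)]; ring
      rw [Finset.sum_congr rfl hsplit, Finset.sum_add_distrib, ih m]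
      have key2 : (∑ a ∈ Finset.range (m+1),
          q^(m+1) * (q^((b-(a+1))*(m+1-(a+1))) * qBinom q b (a+1) * qBinom q c (m+1-(a+1))))
          + q^((b+1-0)*(m+1-0)) * qBinom q (b+1) 0 * qBinom q c (m+1-0)
          = q^(m+1) * qBinom q (b+c) (m+1) := by
        symm
        rw [← ih (m+1), Finset.mul_sum, Finset.sum_range_succ']
        congr 1
        rw [Nat.sub_zero, Nat.sub_zero, Nat.sub_zero, qBinom_zero_right hq,
          qBinom_zero_right hq]
        have hpow : q ^ ((b+1)*(m+1)) = q ^ (m+1) * q ^ (b*(m+1)) := by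
          rw [← pow_add]; congr 1; ring
        linear_combination (qBinom q c (m+1)) * hpow
      rw [add_right_comm, key2, show b+1+c = b+c+1 by omega, qBinom_pascalA hq]

lemma lem1 {q : ℝ} (hq : q ∈ Set.Ioo (0:ℝ) 1) (x y : ℝ) (hx : x ≠ 0) (b : ℕ) :
    ∑ a ∈ Finset.range (b+1), (y/x)^a * qPoch x q a * qPoch (y/x) q (b-a) * qBinom q b a
      = qPoch y q b := by
  induction b with
  | zero => simp [qPoch_zero, qBinom_zero_right hq]
  | succ b ih =>
    have hstep : ∀ a ∈ Finset.range (b+1),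
        (y/x)^(a+1) * qPoch x q (a+1) * qPoch (y/x) q (b+1-(a+1)) * qBinom q (b+1) (a+1)
        = (y/x)^(a+1) * qPoch x q (a+1) * qPoch (y/x) q (b+1-(a+1)) * qBinom q b (a+1)
          + ((y/x)^a * qPoch x q a * qPoch (y/x) q (b-a) * qBinom q b a)
              * ((y/x) * (1-x*q^a) * q^(b-a)) := by
      intro a ha
      rw [qBinom_pascalB hq]
      have e1 : b+1-(a+1) = b-a := by omega
      rw [e1, qPoch_succ x q a]
      ring
    rw [Finset.sum_range_succ', Finset.sum_congr rfl hstep, Finset.sum_add_distrib]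
    have hC0 : qBinom q (b+1) 0 = qBinom q b 0 := by
      rw [qBinom_zero_right hq, qBinom_zero_right hq]
    rw [hC0, add_right_comm]
    have peel : (∑ a ∈ Finset.range (b+1+1),
          (y/x)^a * qPoch x q a * qPoch (y/x) q (b+1-a) * qBinom q b a)
        = (∑ a ∈ Finset.range (b+1),
            (y/x)^(a+1) * qPoch x q (a+1) * qPoch (y/x) q (b+1-(a+1)) * qBinom q b (a+1))
          + (y/x)^0 * qPoch x q 0 * qPoch (y/x) q (b+1-0) * qBinom q b 0 :=
      Finset.sum_range_succ' _ _
    rw [← peel, Finset.sum_range_succ, qBinom_of_lt (lt_add_one b), mul_zero, add_zero]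
    have hmerge : ∀ a ∈ Finset.range (b+1),
        (y/x)^a * qPoch x q a * qPoch (y/x) q (b+1-a) * qBinom q b a
          + ((y/x)^a * qPoch x q a * qPoch (y/x) q (b-a) * qBinom q b a)
              * ((y/x) * (1-x*q^a) * q^(b-a))
        = ((y/x)^a * qPoch x q a * qPoch (y/x) q (b-a) * qBinom q b a) * (1 - y*q^b) := by
      intro a ha
      have ham : a ≤ b := by
        have := Finset.mem_range.mp ha; omega
      obtain ⟨d, rfl⟩ : ∃ d, b = a + d := ⟨b - a, by omega⟩
      rw [show a+d-a = d by omega, show a+d+1-a = d+1 by omega, qPoch_succ (y/x) q d, pow_add]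
      have hy' : y / x * x = y := div_mul_cancel₀ y hx
      field_simp
      ring
    rw [← Finset.sum_add_distrib, Finset.sum_congr rfl hmerge, ← Finset.sum_mul, ih,
      qPoch_succ y q b]

lemma triangle (N : ℕ) (f : ℕ → ℕ → ℝ) (hf : ∀ a s, N < a + s → f a s = 0) :
    ∑ a ∈ Finset.range (N+1), ∑ s ∈ Finset.range (N+1), f a s
    = ∑ m ∈ Finset.range (N+1), ∑ a ∈ Finset.range (m+1), f a (m-a) := by
  rw [← Finset.sum_product']
  rw [← Finset.sum_filter_of_ne
    (p := fun p : ℕ × ℕ => p.1 + p.2 ≤ N) (fun p _ hp => by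
      by_contra h
      exact hp (hf p.1 p.2 (by omega)))]
  rw [Finset.sum_sigma']
  refine Finset.sum_nbij' (fun p => (⟨p.1 + p.2, p.1⟩ : (_ : ℕ) × ℕ)) (fun x => (x.2, x.1 - x.2))
    ?_ ?_ ?_ ?_ ?_
  · rintro ⟨a, s⟩ hp
    simp only [Finset.mem_filter, Finset.mem_product, Finset.mem_range] at hp
    simp only [Finset.mem_sigma, Finset.mem_range]
    omega
  · rintro ⟨m, a⟩ hx
    simp only [Finset.mem_sigma, Finset.mem_range] at hx
    simp only [Finset.mem_filter, Finset.mem_product, Finset.mem_range]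
    omega
  · rintro ⟨a, s⟩ hp
    have h' : a + s - a = s := by omega
    simp [h']
  · rintro ⟨m, a⟩ hx
    simp only [Finset.mem_sigma, Finset.mem_range] at hx
    simp only [Sigma.mk.inj_iff]
    exact ⟨by omega, heq_of_eq rfl⟩
  · rintro ⟨a, s⟩ hp
    simp only
    congr 1
    omega

lemma sum_Icc_succ {M : Type*} [AddCommMonoid M] (n : ℕ) (B : Fin (n+1) → ℕ)
    (f : (Fin (n+1) → ℕ) → M) :
    ∑ A ∈ Finset.Icc (0 : Fin (n+1) → ℕ) B, f A
    = ∑ a ∈ Finset.range (B 0 + 1),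
        ∑ A' ∈ Finset.Icc (0 : Fin n → ℕ) (fun i => B i.succ), f (Fin.cons a A') := by
  rw [← Finset.sum_product']
  refine Finset.sum_nbij' (fun A => ((A 0 : ℕ), Fin.tail A)) (fun p => Fin.cons p.1 p.2)
    ?_ ?_ ?_ ?_ ?_
  · intro A hA
    rw [Finset.mem_Icc] at hA
    simp only [Finset.mem_product, Finset.mem_range, Finset.mem_Icc]
    refine ⟨Nat.lt_succ_of_le (hA.2 0), ?_, ?_⟩
    · intro i; exact Nat.zero_le _
    · intro i; exact hA.2 i.succ
  · rintro ⟨a, A'⟩ hp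
    simp only [Finset.mem_product, Finset.mem_range, Finset.mem_Icc] at hp
    rw [Finset.mem_Icc]
    refine ⟨fun i => Nat.zero_le _, fun i => ?_⟩
    induction i using Fin.cases with
    | zero => simpa [Fin.cons_zero] using Nat.lt_succ_iff.mp hp.1
    | succ j => simpa [Fin.cons_succ] using hp.2.2 j
  · intro A hA
    exact Fin.cons_self_tail A
  · rintro ⟨a, A'⟩ hp
    simp [Fin.tail_cons]
  · intro A hA
    rw [Fin.cons_self_tail]

lemma expSplit (n : ℕ) (B : Fin (n+1) → ℕ) (a : ℕ) (A' : Fin n → ℕ) :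
    (∑ p ∈ Finset.univ.filter (fun p : Fin (n+1) × Fin (n+1) => p.1 < p.2),
        (B p.1 - (Fin.cons a A' : Fin (n+1) → ℕ) p.1) * (Fin.cons a A' : Fin (n+1) → ℕ) p.2)
    = (B 0 - a) * (∑ i, A' i)
      + ∑ p ∈ Finset.univ.filter (fun p : Fin n × Fin n => p.1 < p.2),
          (B p.1.succ - A' p.1) * A' p.2 := by
  rw [Finset.sum_filter, Finset.sum_filter, Fintype.sum_prod_type, Fin.sum_univ_succ]
  congr 1
  · rw [Fin.sum_univ_succ]
    simp [Fin.succ_pos, Finset.mul_sum]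
  · rw [Fintype.sum_prod_type]
    refine Finset.sum_congr rfl fun i _ => ?_
    rw [Fin.sum_univ_succ]
    simp [Fin.succ_lt_succ_iff]

lemma lemM {q : ℝ} (hq : q ∈ Set.Ioo (0:ℝ) 1) :
    ∀ (n : ℕ) (B : Fin n → ℕ) (g : ℕ → ℝ),
    ∑ A ∈ Finset.Icc (0 : Fin n → ℕ) B,
      g (∑ i, A i) *
        q ^ (∑ p ∈ Finset.univ.filter (fun p : Fin n × Fin n => p.1 < p.2),
              (B p.1 - A p.1) * A p.2) *
        ∏ i, qBinom q (B i) (A i)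
    = ∑ m ∈ Finset.range (∑ i, B i + 1), g m * qBinom q (∑ i, B i) m := by
  intro n
  induction n with
  | zero =>
    intro B g
    have hB : B = 0 := Subsingleton.elim _ _
    subst hB
    simp [Finset.Icc_self, qBinom_zero_right hq]
  | succ n ih =>
    intro B g
    rw [sum_Icc_succ]
    have inner : ∀ a ∈ Finset.range (B 0 + 1),
        (∑ A' ∈ Finset.Icc (0 : Fin n → ℕ) (fun i => B i.succ),
          g (∑ i, (Fin.cons a A' : Fin (n+1) → ℕ) i) *
            q ^ (∑ p ∈ Finset.univ.filter (fun p : Fin (n+1) × Fin (n+1) => p.1 < p.2),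
                  (B p.1 - (Fin.cons a A' : Fin (n+1) → ℕ) p.1) *
                    (Fin.cons a A' : Fin (n+1) → ℕ) p.2) *
            ∏ i, qBinom q (B i) ((Fin.cons a A' : Fin (n+1) → ℕ) i))
        = ∑ s ∈ Finset.range ((∑ i : Fin n, B i.succ) + 1),
            g (a + s) * (q ^ ((B 0 - a) * s) * qBinom q (B 0) a
              * qBinom q (∑ i : Fin n, B i.succ) s) := by
      intro a _
      calc
        _ = ∑ A' ∈ Finset.Icc (0 : Fin n → ℕ) (fun i => B i.succ),
              (fun m => g (a + m) * q ^ ((B 0 - a) * m) * qBinom q (B 0) a) (∑ i, A' i) *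
                q ^ (∑ p ∈ Finset.univ.filter (fun p : Fin n × Fin n => p.1 < p.2),
                      ((fun i => B i.succ) p.1 - A' p.1) * A' p.2) *
                ∏ i, qBinom q ((fun i => B i.succ) i) (A' i) := by
          refine Finset.sum_congr rfl fun A' hA' => ?_
          rw [expSplit, Fin.sum_cons, pow_add, Fin.prod_univ_succ]
          simp only [Fin.cons_zero, Fin.cons_succ]
          ring
        _ = ∑ m ∈ Finset.range ((∑ i : Fin n, (fun i => B i.succ) i) + 1),
              (fun m => g (a + m) * q ^ ((B 0 - a) * m) * qBinom q (B 0) a) m *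
                qBinom q (∑ i : Fin n, (fun i => B i.succ) i) m := by
          exact ih (fun i => B i.succ) (fun m => g (a + m) * q ^ ((B 0 - a) * m) * qBinom q (B 0) a)
        _ = _ := by
          refine Finset.sum_congr rfl fun s _ => ?_
          simp only
          ring
    rw [Finset.sum_congr rfl inner]
    have hsum : (∑ i, B i) = B 0 + ∑ i : Fin n, B i.succ := Fin.sum_univ_succ B
    rw [hsum]
    have hext1 : ∀ a ∈ Finset.range (B 0 + 1),
        (∑ s ∈ Finset.range ((∑ i : Fin n, B i.succ) + 1),
          g (a + s) * (q ^ ((B 0 - a) * s) * qBinom q (B 0) a * qBinom q (∑ i : Fin n, B i.succ) s))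
        = ∑ s ∈ Finset.range (B 0 + (∑ i : Fin n, B i.succ) + 1),
          g (a + s) * (q ^ ((B 0 - a) * s) * qBinom q (B 0) a
            * qBinom q (∑ i : Fin n, B i.succ) s) := by
      intro a _
      refine Finset.sum_subset (Finset.range_subset_range.2 (by omega)) fun s _ hs => ?_
      rw [qBinom_of_lt (show (∑ i : Fin n, B i.succ) < s by
        simp only [Finset.mem_range] at hs ⊢; omega)]
      ring
    rw [Finset.sum_congr rfl hext1]
    have hext2 :
        (∑ a ∈ Finset.range (B 0 + 1), ∑ s ∈ Finset.range (B 0 + (∑ i : Fin n, B i.succ) + 1),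
          g (a + s) * (q ^ ((B 0 - a) * s) * qBinom q (B 0) a * qBinom q (∑ i : Fin n, B i.succ) s))
        = ∑ a ∈ Finset.range (B 0 + (∑ i : Fin n, B i.succ) + 1),
            ∑ s ∈ Finset.range (B 0 + (∑ i : Fin n, B i.succ) + 1),
          g (a + s) * (q ^ ((B 0 - a) * s) * qBinom q (B 0) a
            * qBinom q (∑ i : Fin n, B i.succ) s) := by
      refine Finset.sum_subset (Finset.range_subset_range.2 (by omega)) fun a _ ha => ?_
      have : B 0 < a := by simp only [Finset.mem_range] at ha ⊢; omega
      rw [qBinom_of_lt this]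
      simp [Finset.sum_eq_zero_iff]
    have hvan : ∀ a s : ℕ, B 0 + (∑ i : Fin n, B i.succ) < a + s →
        g (a + s) * (q ^ ((B 0 - a) * s) * qBinom q (B 0) a
          * qBinom q (∑ i : Fin n, B i.succ) s) = 0 := by
      intro a s hNs
      rcases le_or_gt a (B 0) with h1 | h1
      · rw [qBinom_of_lt (show (∑ i : Fin n, B i.succ) < s by omega)]; ring
      · rw [qBinom_of_lt h1]; ring
    rw [hext2, triangle _ _ hvan]
    refine Finset.sum_congr rfl fun m hm => ?_
    have : ∀ a ∈ Finset.range (m+1),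
        g (a + (m - a)) * (q ^ ((B 0 - a) * (m - a)) * qBinom q (B 0) a
          * qBinom q (∑ i : Fin n, B i.succ) (m - a))
        = g m * (q ^ ((B 0 - a) * (m - a)) * qBinom q (B 0) a
            * qBinom q (∑ i : Fin n, B i.succ) (m - a)) := by
      intro a ha
      have : a + (m - a) = m := by
        simp only [Finset.mem_range] at ha; omega
      rw [this]
    rw [Finset.sum_congr rfl this, ← Finset.mul_sum, ← lemV hq (B 0) (∑ i : Fin n, B i.succ) m]

/-- Stochasticity of the q-deformed multivariate hypergeometric weights:
`Σ_{A ≤ B} Φ(A,B;x,y) = 1`, where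
`Φ(A,B;x,y) = (y/x)^{|A|}(x;q)_{|A|}(y/x;q)_{|B-A|}/(y;q)_{|B|}
  · q^{Σ_{i<j}(B_i-A_i)A_j} ∏_i binom(B_i,A_i)_q`. -/
theorem stmt11 (q x y : ℝ) (hq : q ∈ Set.Ioo (0 : ℝ) 1) (hx : x ≠ 0)
    (n : ℕ) (B : Fin n → ℕ) (hy : qPoch y q (∑ i, B i) ≠ 0) :
    ∑ A ∈ Finset.Icc (0 : Fin n → ℕ) B,
      (y / x) ^ (∑ i, A i) * qPoch x q (∑ i, A i) *
        qPoch (y / x) q (∑ i, (B i - A i)) / qPoch y q (∑ i, B i) *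
        q ^ (∑ p ∈ Finset.univ.filter (fun p : Fin n × Fin n => p.1 < p.2),
              (B p.1 - A p.1) * A p.2) *
        ∏ i, qBinom q (B i) (A i) = 1 := by
  have hcongr : ∀ A ∈ Finset.Icc (0 : Fin n → ℕ) B,
      (y / x) ^ (∑ i, A i) * qPoch x q (∑ i, A i) *
        qPoch (y / x) q (∑ i, (B i - A i)) / qPoch y q (∑ i, B i) *
        q ^ (∑ p ∈ Finset.univ.filter (fun p : Fin n × Fin n => p.1 < p.2),
              (B p.1 - A p.1) * A p.2) *
        ∏ i, qBinom q (B i) (A i)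
      = (fun m => (y / x) ^ m * qPoch x q m *
            qPoch (y / x) q ((∑ i, B i) - m) / qPoch y q (∑ i, B i)) (∑ i, A i) *
        q ^ (∑ p ∈ Finset.univ.filter (fun p : Fin n × Fin n => p.1 < p.2),
              (B p.1 - A p.1) * A p.2) *
        ∏ i, qBinom q (B i) (A i) := by
    intro A hA
    rw [Finset.mem_Icc] at hA
    have hsub : (∑ i, (B i - A i)) = (∑ i, B i) - (∑ i, A i) := by
      have h1 : (∑ i, (B i - A i)) + (∑ i, A i) = ∑ i, B i := by
        rw [← Finset.sum_add_distrib]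
        exact Finset.sum_congr rfl fun i _ => by have h2 : A i ≤ B i := hA.2 i; omega
      omega
    simp only
    rw [hsub]
  rw [Finset.sum_congr rfl hcongr, lemM hq n B
    (fun m => (y / x) ^ m * qPoch x q m *
      qPoch (y / x) q ((∑ i, B i) - m) / qPoch y q (∑ i, B i))]
  have hfin : ∀ m ∈ Finset.range ((∑ i, B i) + 1),
      (fun m => (y / x) ^ m * qPoch x q m *
          qPoch (y / x) q ((∑ i, B i) - m) / qPoch y q (∑ i, B i)) m *
        qBinom q (∑ i, B i) m
      = ((y / x) ^ m * qPoch x q m * qPoch (y / x) q ((∑ i, B i) - m) *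
          qBinom q (∑ i, B i) m) / qPoch y q (∑ i, B i) := by
    intro m _
    simp only
    ring
  rw [Finset.sum_congr rfl hfin, ← Finset.sum_div, lem1 hq x y hx, div_self hy]
end

section
/- Let θ ∈ (0, 1/2), φ ∈ (0, π), and ω < -1. For each integer n ≥ 0, with X_1 = n+1 and X_2 = n - ω, the inequality X_1^2 / ((X_1^2 + θ^2 + 2θ X_1 cos φ)(X_1 + θ)^2) > X_2^2 / ((X_2^2 + θ^2 + 2θ X_2 cos φ)(X_2 + θ)^2) holds. -/
/-- For `θ ∈ (0,1/2)`, `φ ∈ (0,π)`, `ω < -1` and `n ≥ 0`, with `X₁ = n+1` and `X₂ = n-ω`: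
`X₁²/((X₁²+θ²+2θX₁cos φ)(X₁+θ)²) > X₂²/((X₂²+θ²+2θX₂cos φ)(X₂+θ)²)`. -/
theorem stmt16 (θ φ ω : ℝ) (hθ : θ ∈ Set.Ioo (0 : ℝ) (1 / 2))
    (hφ : φ ∈ Set.Ioo (0 : ℝ) Real.pi) (hω : ω < -1) (n : ℕ) :
    ((n : ℝ) - ω) ^ 2 /
        ((((n : ℝ) - ω) ^ 2 + θ ^ 2 + 2 * θ * ((n : ℝ) - ω) * Real.cos φ) *
          (((n : ℝ) - ω) + θ) ^ 2)
      < ((n : ℝ) + 1) ^ 2 /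
        ((((n : ℝ) + 1) ^ 2 + θ ^ 2 + 2 * θ * ((n : ℝ) + 1) * Real.cos φ) *
          (((n : ℝ) + 1) + θ) ^ 2) := by
  obtain ⟨hθ0, hθ1⟩ := hθ
  obtain ⟨hφ0, hφ1⟩ := hφ
  set c := Real.cos φ with hc
  have hc1 : -1 < c := by
    have h := Real.cos_lt_cos_of_nonneg_of_le_pi (le_of_lt hφ0) le_rfl hφ1
    rw [Real.cos_pi] at h
    exact h
  have hc2 : c ≤ 1 := Real.cos_le_one φ
  set a : ℝ := (n : ℝ) + 1 with ha
  set b : ℝ := (n : ℝ) - ω with hb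
  have hn0 : (0 : ℝ) ≤ (n : ℝ) := Nat.cast_nonneg n
  have ha1 : 1 ≤ a := by rw [ha]; linarith
  have hab : a < b := by rw [ha, hb]; linarith
  have hb1 : 1 < b := lt_of_le_of_lt ha1 hab
  have haux : ∀ x : ℝ, 1 ≤ x → 0 < x ^ 2 + θ ^ 2 + 2 * θ * x * c := by
    intro x hx
    have h1 : 0 < θ * x * (1 + c) := by
      apply mul_pos (mul_pos hθ0 (by linarith)) (by linarith)
    nlinarith [sq_nonneg (x - θ)]
  have hDa : 0 < a ^ 2 + θ ^ 2 + 2 * θ * a * c := haux a ha1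
  have hDb : 0 < b ^ 2 + θ ^ 2 + 2 * θ * b * c := haux b (le_of_lt hb1)
  have hden1 : 0 < (a ^ 2 + θ ^ 2 + 2 * θ * a * c) * (a + θ) ^ 2 := by
    apply mul_pos hDa; positivity
  have hden2 : 0 < (b ^ 2 + θ ^ 2 + 2 * θ * b * c) * (b + θ) ^ 2 := by
    apply mul_pos hDb; positivity
  rw [div_lt_div_iff₀ hden2 hden1]
  have key : a ^ 2 * ((b ^ 2 + θ ^ 2 + 2 * θ * b * c) * (b + θ) ^ 2)
      - b ^ 2 * ((a ^ 2 + θ ^ 2 + 2 * θ * a * c) * (a + θ) ^ 2)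
      = (b - a) * ((a + b) * (a ^ 2 * b ^ 2 - θ ^ 4)
          + 2 * θ * (1 + c) * a * b * (a * b - θ ^ 2)) := by ring
  have hθ2 : θ ^ 2 < 1 := by nlinarith
  have hab1 : 1 ≤ a * b := by nlinarith
  have h1 : 0 < (a + b) * (a ^ 2 * b ^ 2 - θ ^ 4) := by
    apply mul_pos (by linarith)
    nlinarith [sq_nonneg θ]
  have habθ : θ ^ 2 ≤ a * b := by linarith
  have h2 : 0 ≤ 2 * θ * (1 + c) * a * b * (a * b - θ ^ 2) :=
    mul_nonneg (mul_nonneg (mul_nonneg (mul_nonneg (by linarith) (by linarith))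
      (by linarith)) (by linarith)) (by linarith)
  have hpos : 0 < (b - a) * ((a + b) * (a ^ 2 * b ^ 2 - θ ^ 4)
      + 2 * θ * (1 + c) * a * b * (a * b - θ ^ 2)) :=
    mul_pos (sub_pos.mpr hab) (by linarith)
  linarith [key]
end
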